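/- arXiv:1210.0910 — 6 statements merged into one kernel-verified Lean document; each statement's English description precedes it below -/
import Mathlib

section
/- Let λ̄ be the algebra homomorphism on Z⟨a,b⟩ with λ̄(a) = 0 and λ̄(b) = a − b. For any graded poset P of rank n+1, λ̄(Ψ(P)) = (−1)^{n+1} · μ(0̂, 1̂) · (a − b)^n. -/
open scoped TensorProduct
open scoped Classical

noncomputable section

abbrev Alg : Type := MonoidAlgebra ℤ (FreeMonoid Bool)

def va : Alg := MonoidAlgebra.of ℤ (FreeMonoid Bool) (FreeMonoid.of false)
def vb : Alg := MonoidAlgebra.of ℤ (FreeMonoid Bool) (FreeMonoid.of true)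

def monoOf (l : List Bool) : Alg := MonoidAlgebra.of ℤ (FreeMonoid Bool) (FreeMonoid.ofList l)

def toF (x : Alg) : FreeMonoid Bool →₀ ℤ := x.coeff

/-- The weight of a chain encoded as a strictly increasing map `f : Fin (k+1) → P`. -/
def wtChain {P : Type} (ρ : P → ℕ) {k : ℕ} (f : Fin (k+1) → P) : Alg :=
  (List.ofFn (fun i : Fin k =>
    (va - vb) ^ (ρ (f i.succ) - ρ (f i.castSucc) - 1) *
      (if (i : ℕ) + 1 < k then vb else 1))).prod

def zetaChain {P : Type} (zb : P → P → ℤ) {k : ℕ} (f : Fin (k+1) → P) : ℤ :=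
  ∏ i : Fin k, zb (f i.castSucc) (f i.succ)

/-- The ab-index of the interval `[lo, hi]` of a quasi-graded poset `(P, ρ, zb)`. -/
def PsiI {P : Type} [Fintype P] [PartialOrder P] (ρ : P → ℕ) (zb : P → P → ℤ)
    (lo hi : P) : Alg :=
  ∑ k ∈ Finset.range (Fintype.card P + 1),
    ∑ f : Fin (k+1) → P,
      if StrictMono f ∧ f 0 = lo ∧ f (Fin.last k) = hi
      then zetaChain zb f • wtChain ρ f else 0

/-- The algebra map `κ` with `κ(a) = a - b`, `κ(b) = 0`. -/
def kappa : Alg →ₐ[ℤ] Alg :=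
  MonoidAlgebra.lift ℤ Alg (FreeMonoid Bool)
    (FreeMonoid.lift (fun s => if s then 0 else va - vb))

/-- The algebra map `λ̄` with `λ̄(a) = 0`, `λ̄(b) = a - b`. -/
def lambdabar : Alg →ₐ[ℤ] Alg :=
  MonoidAlgebra.lift ℤ Alg (FreeMonoid Bool)
    (FreeMonoid.lift (fun s => if s then va - vb else 0))

/-- `η` on monomials: `b^m a^k ↦ 2 (a-b)^(m+k)`, other monomials to `0`. -/
def etaMon (w : FreeMonoid Bool) : Alg :=
  if ∃ m k : ℕ, FreeMonoid.toList w = List.replicate m true ++ List.replicate k false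
  then (2 : ℤ) • (va - vb) ^ (FreeMonoid.toList w).length else 0

def etaOp (x : Alg) : Alg := (toF x).sum fun w c => c • etaMon w

/-- The letter-deletion coproduct on `Z⟨a,b⟩`. -/
def Delta (x : Alg) : Alg ⊗[ℤ] Alg :=
  (toF x).sum fun w c => c •
    ∑ i ∈ Finset.range (FreeMonoid.toList w).length,
      monoOf ((FreeMonoid.toList w).take i) ⊗ₜ[ℤ] monoOf ((FreeMonoid.toList w).drop (i+1))

/-- The Sweedler-style convolution `x ↦ Σ F(x₍₁₎) · b · G(x₍₂₎)`. -/
def sweedler (F G : Alg → Alg) (x : Alg) : Alg :=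
  (toF x).sum fun w c => c •
    ∑ i ∈ Finset.range (FreeMonoid.toList w).length,
      F (monoOf ((FreeMonoid.toList w).take i)) * vb *
        G (monoOf ((FreeMonoid.toList w).drop (i+1)))

/-- `phiAux n = φ_{n+1}`, defined by `φ₁ = κ` and `φ_{k+1}(w) = Σ φ_k(w₍₁₎) · b · η(w₍₂₎)`. -/
def phiAux : ℕ → Alg → Alg
  | 0 => fun x => kappa x
  | (n+1) => fun x => sweedler (phiAux n) etaOp x

def maxLen (x : Alg) : ℕ := (toF x).support.sup fun w => (FreeMonoid.toList w).length

/-- The operator `φ = Σ_{k ≥ 1} φ_k` (the sum is finite on any given polynomial). -/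
def phi (x : Alg) : Alg := ∑ k ∈ Finset.range (maxLen x + 1), phiAux k x

/-- `ω` on a monomial: replace each occurrence of `ab` by `2d` and remaining letters by `c`. -/
def omegaList : List Bool → Alg
  | [] => 1
  | false :: true :: rest => ((2:ℤ) • (va * vb + vb * va)) * omegaList rest
  | _ :: rest => (va + vb) * omegaList rest

def omegaOp (x : Alg) : Alg := (toF x).sum fun w c => c • omegaList (FreeMonoid.toList w)

/-- The operator `G(w) = φ(w)·b + Σ φ(w₍₁₎)·b·λ̄(w₍₂₎)·(a-b)`. -/
def Gop (w : Alg) : Alg := phi w * vb + sweedler phi (fun y => lambdabar y) w * (va - vb)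

/-- The reversal map `u ↦ u*` reading each monomial backwards. -/
def revOp (x : Alg) : Alg :=
  (toF x).sum fun w c =>
    MonoidAlgebra.single (FreeMonoid.ofList (FreeMonoid.toList w).reverse) c

/-- `H'` deletes the last letter of each monomial, `H'(1) = 0`. -/
def Hp (x : Alg) : Alg :=
  (toF x).sum fun w c => if w = 1 then 0 else c • monoOf ((FreeMonoid.toList w).dropLast)

end

/-!
Under `λ̄` the letter `a` dies and `b` becomes `a - b`, so the weight of a chain
`⊥ = x₀ < ⋯ < x_k = ⊤`, a product of the powers `(a - b) ^ (ρ x_{i+1} - ρ x_i - 1)` separated by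
`k - 1` letters `b`, is sent to `(-1) ^ (n + 1 - k) (a - b) ^ n`. Hence
`λ̄(Ψ(P)) = (-1) ^ (n + 1) (Σ_k (-1) ^ k c_k) (a - b) ^ n`, where `c_k` counts the chains of length
`k`, and the alternating sum is `μ(⊥, ⊤)` by Philip Hall's theorem: deleting the bottom of a chain
gives `c_{k+1}(x, y) = Σ_{x < z ≤ y} c_k(z, y)`, the same recursion as
`μ(x, y) = -Σ_{x < z ≤ y} μ(z, y)`.
-/

open Finset

section Chains

variable {P : Type*} [PartialOrder P] [Fintype P]

noncomputable def chainsFromTo (lo hi : P) (k : ℕ) : Finset (Fin (k + 1) → P) :=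
  {f | StrictMono f ∧ f 0 = lo ∧ f (Fin.last k) = hi}

theorem card_chainsFromTo_zero (lo hi : P) :
    #(chainsFromTo lo hi 0) = if lo = hi then 1 else 0 := by
  split_ifs with h
  · subst h
    rw [card_eq_one]
    refine ⟨fun _ => lo, eq_singleton_iff_unique_mem.2 ⟨?_, fun f hf => ?_⟩⟩
    · simp [chainsFromTo, Subsingleton.strictMono]
    · simp only [chainsFromTo, mem_filter, mem_univ, true_and] at hf
      exact funext fun i => Fin.fin_one_eq_zero i ▸ hf.2.1
  · refine card_eq_zero.2 (filter_eq_empty_iff.2 fun f _ ⟨_, h0, hl⟩ => h ?_)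
    rw [← h0, ← hl]
    rfl

theorem chainsFromTo_eq_empty_of_card_le (lo hi : P) {k : ℕ} (hk : Fintype.card P ≤ k) :
    chainsFromTo lo hi k = ∅ :=
  filter_eq_empty_iff.2 fun f _ ⟨hf, _⟩ => by
    have := Fintype.card_le_of_injective f hf.injective
    simp only [Fintype.card_fin] at this
    omega

theorem card_chainsFromTo_succ [LocallyFiniteOrder P] (lo hi : P) (k : ℕ) :
    #(chainsFromTo lo hi (k + 1)) = ∑ x ∈ Ioc lo hi, #(chainsFromTo x hi k) := by
  rw [← card_sigma]
  refine card_bij' (fun f _ => ⟨Fin.tail f 0, Fin.tail f⟩) (fun p _ => Fin.cons lo p.2)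
    ?_ ?_ ?_ ?_
  · intro f hf
    simp only [chainsFromTo, mem_filter, mem_univ, true_and] at hf
    obtain ⟨hmono, h0, hl⟩ := hf
    simp only [mem_sigma, mem_Ioc, chainsFromTo, mem_filter, mem_univ, true_and]
    exact ⟨⟨h0 ▸ hmono (Fin.succ_pos 0), hl ▸ hmono.monotone (Fin.le_last _)⟩,
      hmono.comp Fin.strictMono_succ, hl⟩
  · rintro ⟨x, g⟩ hg
    simp only [mem_sigma, mem_Ioc, chainsFromTo, mem_filter, mem_univ, true_and] at hg
    obtain ⟨⟨hlo, -⟩, hmono, h0, hl⟩ := hg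
    simp only [chainsFromTo, mem_filter, mem_univ, true_and, Fin.cons_zero, Fin.cons_last]
    exact ⟨Fin.strictMono_cons.2 ⟨fun j => hlo.trans_le (h0 ▸ hmono.monotone (Fin.zero_le j)),
      hmono⟩, hl⟩
  · intro f hf
    simp only [chainsFromTo, mem_filter, mem_univ, true_and] at hf
    exact hf.2.1 ▸ Fin.cons_self_tail f
  · rintro ⟨x, g⟩ hg
    simp only [mem_sigma, chainsFromTo, mem_filter, mem_univ, true_and] at hg
    simp [Fin.tail_cons, hg.2.2.1]

theorem mu_eq_sum_card_chainsFromTo [DecidableEq P] [LocallyFiniteOrder P] (lo hi : P) :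
    IncidenceAlgebra.mu ℤ lo hi
      = ∑ k ∈ range (Fintype.card P + 1), (-1) ^ k * (#(chainsFromTo lo hi k) : ℤ) := by
  induction lo using WellFoundedGT.induction with
  | _ lo ih =>
  simp_rw [sum_range_succ', card_chainsFromTo_succ, card_chainsFromTo_zero]
  rcases eq_or_ne lo hi with rfl | hne
  · simp
  have hmu : ∀ x ∈ Ioc lo hi, IncidenceAlgebra.mu ℤ x hi
      = ∑ k ∈ range (Fintype.card P), (-1) ^ k * (#(chainsFromTo x hi k) : ℤ) := by
    intro x hx
    rw [ih x (mem_Ioc.1 hx).1, sum_range_succ,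
      chainsFromTo_eq_empty_of_card_le x hi le_rfl, card_empty]
    simp
  rw [IncidenceAlgebra.mu_eq_neg_sum_Ioc_of_ne hne, sum_congr rfl hmu, sum_comm]
  simp [hne, pow_succ, mul_sum]

end Chains

theorem StrictMono.sum_gaps_add {k : ℕ} {g : Fin (k + 1) → ℕ} (hg : StrictMono g) :
    ∑ i : Fin k, (g i.succ - g i.castSucc - 1) + k = g (Fin.last k) - g 0 := by
  induction k with
  | zero => simp
  | succ k ih =>
    have hinit := ih (hg.comp Fin.strictMono_castSucc)
    simp only [Function.comp_apply, ← Fin.succ_castSucc] at hinit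
    have hlast := hg (Fin.castSucc_lt_last (Fin.last k))
    have hfirst := hg.monotone (Fin.zero_le (Fin.last k).castSucc)
    rw [Fin.sum_univ_castSucc]
    simp only [Fin.castSucc_zero] at hinit hfirst
    simp only [Fin.succ_last, Nat.succ_eq_add_one]
    omega

theorem lambdabar_va : lambdabar va = 0 := by
  simp [lambdabar, va]

theorem lambdabar_vb : lambdabar vb = va - vb := by
  simp [lambdabar, vb]

open Polynomial in
theorem lambdabar_wtChain {P : Type} (ρ : P → ℕ) {k : ℕ} (f : Fin (k + 1) → P)
    (hf : StrictMono (ρ ∘ f)) (hk : 0 < k) :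
    lambdabar (wtChain ρ f) = (-1 : ℤ) ^ (ρ (f (Fin.last k)) - ρ (f 0) - k) •
      (va - vb) ^ (ρ (f (Fin.last k)) - ρ (f 0) - 1) := by
  obtain ⟨k, rfl⟩ := Nat.exists_eq_add_one_of_ne_zero hk.ne'
  have hgaps := hf.sum_gaps_add
  simp only [Function.comp_apply] at hgaps
  -- `λ̄` takes values in the commutative subring `ℤ[a - b]`, where the product can be reordered.
  have hfactor : ∀ (m : ℕ) (c : Prop) [Decidable c],
      lambdabar ((va - vb) ^ m * if c then vb else 1)
        = aeval (va - vb) ((-X : ℤ[X]) ^ m * if c then X else 1) := by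
    intro m c _
    split_ifs <;> simp [lambdabar_va, lambdabar_vb]
  have hcount : ∏ i : Fin (k + 1), (if (i : ℕ) + 1 < k + 1 then (X : ℤ[X]) else 1) = X ^ k := by
    simp [Fin.prod_univ_castSucc]
  rw [wtChain, map_list_prod, List.map_ofFn, Function.comp_def]
  simp only [hfactor]
  rw [← Function.comp_def (aeval (va - vb)), ← List.map_ofFn, ← map_list_prod, List.prod_ofFn,
    prod_mul_distrib, hcount, prod_pow_eq_pow_sum, neg_pow, map_mul, map_mul, map_pow, map_pow,
    aeval_X, map_pow, map_neg, map_one, aeval_X, mul_assoc, ← pow_add, zsmul_eq_mul]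
  set gaps := ∑ i : Fin (k + 1), (ρ (f i.succ) - ρ (f i.castSucc) - 1)
  rw [show ρ (f (Fin.last (k + 1))) - ρ (f 0) - (k + 1) = gaps by omega,
    show ρ (f (Fin.last (k + 1))) - ρ (f 0) - 1 = gaps + k by omega]
  push_cast
  rfl

section Graded

variable {P : Type} [Fintype P] [PartialOrder P]

theorem PsiI_one (ρ : P → ℕ) (lo hi : P) :
    PsiI ρ (fun _ _ => (1 : ℤ)) lo hi
      = ∑ k ∈ range (Fintype.card P + 1), ∑ f ∈ chainsFromTo lo hi k, wtChain ρ f := by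
  simp [PsiI, chainsFromTo, zetaChain, sum_filter]

theorem lambdabar_wtChain_of_mem_chainsFromTo {ρ : P → ℕ} (hρ : StrictMono ρ) {lo hi : P}
    {n k : ℕ} (hlo : ρ lo = 0) (hhi : ρ hi = n + 1) {f : Fin (k + 1) → P}
    (hf : f ∈ chainsFromTo lo hi k) :
    lambdabar (wtChain ρ f) = ((-1 : ℤ) ^ (n + 1) * (-1) ^ k) • (va - vb) ^ n := by
  simp only [chainsFromTo, mem_filter, mem_univ, true_and] at hf
  obtain ⟨hmono, rfl, rfl⟩ := hf
  have hk : 0 < k := Nat.pos_of_ne_zero <| by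
    rintro rfl
    exact absurd (hlo.symm.trans hhi) (by omega)
  have hkn : k ≤ n + 1 := by
    have := (hρ.comp hmono).sum_gaps_add
    simp only [Function.comp_apply, hlo, hhi] at this
    omega
  obtain ⟨m, hm⟩ := Nat.exists_eq_add_of_le hkn
  rw [lambdabar_wtChain ρ f (hρ.comp hmono) hk, hlo, hhi, Nat.sub_zero, Nat.add_sub_cancel, hm,
    Nat.add_sub_cancel_left, pow_add, mul_right_comm, ← pow_add, Even.neg_one_pow ⟨k, rfl⟩,
    one_mul]

theorem lambdabar_PsiI_one {ρ : P → ℕ} (hρ : StrictMono ρ) {lo hi : P} {n : ℕ}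
    (hlo : ρ lo = 0) (hhi : ρ hi = n + 1) :
    lambdabar (PsiI ρ (fun _ _ => (1 : ℤ)) lo hi)
      = ((-1 : ℤ) ^ (n + 1) * ∑ k ∈ range (Fintype.card P + 1),
          (-1) ^ k * (#(chainsFromTo lo hi k) : ℤ)) • (va - vb) ^ n := by
  rw [PsiI_one, map_sum, mul_sum, sum_smul]
  refine sum_congr rfl fun k _ => ?_
  rw [map_sum, sum_congr rfl fun f hf => lambdabar_wtChain_of_mem_chainsFromTo hρ hlo hhi hf,
    sum_const, ← Nat.cast_smul_eq_nsmul ℤ, smul_smul]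
  congr 1
  ring

end Graded

/-- `λ̄(Ψ(P)) = (-1)^{n+1} μ(0̂,1̂) (a-b)^n` for a graded poset of rank `n+1`. -/
theorem lambdabar_abIndex {P : Type} [Fintype P] [PartialOrder P] [BoundedOrder P]
    [DecidableEq P] [LocallyFiniteOrder P]
    (n : ℕ) (ρ : P → ℕ) (hbot : ρ ⊥ = 0) (htop : ρ ⊤ = n + 1)
    (hgrade : ∀ x y : P, x ⋖ y → ρ y = ρ x + 1) :
    lambdabar (PsiI ρ (fun _ _ => (1 : ℤ)) ⊥ ⊤)
      = ((-1 : ℤ) ^ (n + 1) * IncidenceAlgebra.mu ℤ (⊥ : P) ⊤) • (va - vb) ^ n := by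
  have hρ : StrictMono ρ := (strictMono_iff_forall_covBy ρ).2 fun x y h => by
    rw [hgrade x y h]; exact Nat.lt_succ_self _
  rw [lambdabar_PsiI_one hρ hbot htop, mu_eq_sum_card_chainsFromTo]
end

section
/- Let η : Z⟨a,b⟩ → Z⟨a,b⟩ be the linear map with η(b^m a^k) = 2(a−b)^{m+k} on monomials of the form b^m a^k and η(w) = 0 on all other ab-monomials. For any graded poset P of rank n+1, η(Ψ(P)) = Z(P) · (a−b)^n, where Z(P) = Σ_{0̂ ≤ x ≤ 1̂} (−1)^{ρ(x)} μ(0̂, x) is the Zaslavsky invariant. -/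
open scoped TensorProduct
open scoped Classical

/-! Write `c = a - b`. A chain `0̂ = x₀ < ⋯ < x_k = 1̂` contributes `c^e₁ b c^e₂ b ⋯ b c^e_k` to
`Ψ(P)`, where `e_i = ρ(x_i) - ρ(x_{i-1}) - 1`. Expanding, a monomial of the shape `b^m a^l` can only
arise by taking `b` in every factor `c` before the last `b`, so `η` sends the word to
`(-1)^(e₁ + ⋯ + e_{k-1}) (1 + (-1)^e_k) c^n`. Grouping the chains by their penultimate element `z`,
the sign is `(-1)^k` times a function of `ρ z`, and by Philip Hall's theorem the alternating count
of chains from `0̂` to `z` is `μ(0̂, z)`. This leaves `Σ_{z < 1̂} ((-1)^ρ(z) + (-1)^n) μ(0̂, z)`,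
and `Σ_{z < 1̂} μ(0̂, z) = -μ(0̂, 1̂)` turns it into `Z(P)`. -/

noncomputable section

open List in
lemma exists_replicate_true_append_cons_true (l : List Bool) :
    (∃ m k, true :: l = replicate m true ++ replicate k false) ↔
      ∃ m k, l = replicate m true ++ replicate k false := by
  constructor
  · rintro ⟨_ | m, k, h⟩
    · cases k <;> simp [replicate_succ] at h
    · exact ⟨m, k, by simpa [replicate_succ] using h⟩
  · rintro ⟨m, k, rfl⟩
    exact ⟨m + 1, k, rfl⟩

open List in
lemma exists_replicate_true_append_cons_false (l : List Bool) :
    (∃ m k, false :: l = replicate m true ++ replicate k false) ↔ ∀ x ∈ l, x = false := by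
  constructor
  · rintro ⟨_ | m, _ | k, h⟩ <;> simp_all [replicate_succ]
  · intro h
    exact ⟨0, l.length + 1, by simp [replicate_succ, ← eq_replicate_iff.2 ⟨rfl, h⟩]⟩


def linearExtension (F : FreeMonoid Bool → Alg) : Alg →ₗ[ℤ] Alg :=
  Finsupp.linearCombination ℤ F ∘ₗ (MonoidAlgebra.coeffLinearEquiv ℤ).toLinearMap

lemma linearExtension_single (F : FreeMonoid Bool → Alg) (w : FreeMonoid Bool) (c : ℤ) :
    linearExtension F (MonoidAlgebra.single w c) = c • F w := by
  simp [linearExtension]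

lemma etaOp_eq_linearExtension : etaOp = linearExtension etaMon := by
  funext x
  simp [etaOp, linearExtension, toF, Finsupp.linearCombination_apply]

lemma etaOp_sum {ι : Type*} (s : Finset ι) (x : ι → Alg) :
    etaOp (∑ i ∈ s, x i) = ∑ i ∈ s, etaOp (x i) := by
  rw [etaOp_eq_linearExtension, map_sum]

lemma linearExtension_of_mul (F G : FreeMonoid Bool → Alg) (s : Bool) (y : Alg)
    (h : ∀ w, F (FreeMonoid.of s * w) = y * G w) (u : Alg) :
    linearExtension F (MonoidAlgebra.of ℤ _ (FreeMonoid.of s) * u) = y * linearExtension G u := by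
  induction u using MonoidAlgebra.induction_linear with
  | zero => simp
  | add u v hu hv => rw [mul_add, map_add, hu, hv, map_add, mul_add]
  | single w c =>
    rw [MonoidAlgebra.of_apply, MonoidAlgebra.single_mul_single, one_mul, linearExtension_single,
      linearExtension_single, h, mul_smul_comm]

/-- After a leading `a`, only the monomials `a^k` still contribute to `η`. -/
def thetaMon (w : FreeMonoid Bool) : Alg :=
  if ∀ x ∈ FreeMonoid.toList w, x = false
  then (2 : ℤ) • (va - vb) ^ (FreeMonoid.toList w).length else 0

section

local notation "η" => linearExtension etaMon
local notation "θ" => linearExtension thetaMon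
local notation "c" => (va - vb)

lemma eta_one : η 1 = (2 : ℤ) • 1 := by
  rw [MonoidAlgebra.one_def, linearExtension_single, one_smul, etaMon, if_pos ⟨0, 0, rfl⟩]
  rfl

lemma theta_one : θ 1 = (2 : ℤ) • 1 := by
  rw [MonoidAlgebra.one_def, linearExtension_single, one_smul, thetaMon, if_pos (by simp)]
  rfl

lemma eta_vb_mul (u : Alg) : η (vb * u) = c * η u := by
  refine linearExtension_of_mul _ _ true _ (fun w => ?_) u
  simp only [etaMon, FreeMonoid.toList_mul, FreeMonoid.toList_of, List.singleton_append,
    exists_replicate_true_append_cons_true, List.length_cons, pow_succ']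
  split_ifs
  · rw [mul_smul_comm]
  · rw [mul_zero]

lemma eta_va_mul (u : Alg) : η (va * u) = c * θ u := by
  refine linearExtension_of_mul _ _ false _ (fun w => ?_) u
  simp only [etaMon, thetaMon, FreeMonoid.toList_mul, FreeMonoid.toList_of, List.singleton_append,
    exists_replicate_true_append_cons_false, List.length_cons, pow_succ']
  split_ifs
  · rw [mul_smul_comm]
  · rw [mul_zero]

lemma theta_vb_mul (u : Alg) : θ (vb * u) = 0 := by
  rw [← zero_mul (θ u)]
  refine linearExtension_of_mul _ _ true _ (fun w => ?_) u
  simp [thetaMon]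

lemma theta_va_mul (u : Alg) : θ (va * u) = c * θ u := by
  refine linearExtension_of_mul _ _ false _ (fun w => ?_) u
  simp only [thetaMon, FreeMonoid.toList_mul, FreeMonoid.toList_of, List.singleton_append,
    List.forall_mem_cons, true_and, List.length_cons, pow_succ']
  split_ifs
  · rw [mul_smul_comm]
  · rw [mul_zero]

lemma eta_sub_mul (u : Alg) : η (c * u) = c * (θ u - η u) := by
  rw [sub_mul, map_sub, eta_va_mul, eta_vb_mul, mul_sub]

lemma theta_sub_mul (u : Alg) : θ (c * u) = c * θ u := by
  rw [sub_mul, map_sub, theta_va_mul, theta_vb_mul, sub_zero]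

lemma theta_sub_pow_mul (e : ℕ) (u : Alg) : θ (c ^ e * u) = c ^ e * θ u := by
  induction e generalizing u with
  | zero => simp
  | succ e ih => rw [pow_succ', mul_assoc, theta_sub_mul, ih, mul_assoc]

lemma eta_sub_pow_mul_vb_mul (e : ℕ) (u : Alg) :
    η (c ^ e * (vb * u)) = (-1 : ℤ) ^ e • (c ^ (e + 1) * η u) := by
  induction e with
  | zero => simp [eta_vb_mul]
  | succ e ih =>
    rw [pow_succ', mul_assoc, eta_sub_mul, ih, theta_sub_pow_mul, theta_vb_mul, mul_zero,
      zero_sub, mul_neg, mul_smul_comm, pow_succ' (-1 : ℤ), mul_smul, neg_one_smul, ← mul_assoc,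
      ← pow_succ']

lemma eta_sub_pow (e : ℕ) : η (c ^ e) = (1 + (-1 : ℤ) ^ e) • c ^ e := by
  induction e with
  | zero => simp [eta_one, two_smul]
  | succ e ih =>
    have hθ : θ (c ^ e) = (2 : ℤ) • c ^ e := by
      rw [← mul_one (c ^ e), theta_sub_pow_mul, theta_one, mul_smul_comm]
    rw [pow_succ', eta_sub_mul, ih, hθ, ← sub_smul, mul_smul_comm]
    congr 1
    ring

def gapWord {k : ℕ} (d : Fin k → ℕ) : Alg :=
  (List.ofFn fun i : Fin k => c ^ d i * (if (i : ℕ) + 1 < k then vb else 1)).prod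

lemma gapWord_one (d : Fin 1 → ℕ) : gapWord d = c ^ d 0 := by
  simp [gapWord]

lemma gapWord_cons {k : ℕ} (x : ℕ) (d : Fin (k + 1) → ℕ) :
    gapWord (Fin.cons x d : Fin (k + 2) → ℕ) = c ^ x * (vb * gapWord d) := by
  simp [gapWord, List.ofFn_succ, mul_assoc]

lemma eta_gapWord_snoc {k : ℕ} (d : Fin k → ℕ) (t : ℕ) :
    η (gapWord (Fin.snoc d t : Fin (k + 1) → ℕ))
      = ((-1 : ℤ) ^ (∑ i, d i) * (1 + (-1) ^ t)) • c ^ (∑ i, d i + k + t) := by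
  induction k with
  | zero =>
    simpa [gapWord_one, Fin.snoc] using eta_sub_pow t
  | succ k ih =>
    obtain ⟨x, d, rfl⟩ : ∃ x d', d = Fin.cons x d' :=
      ⟨d 0, Fin.tail d, (Fin.cons_self_tail d).symm⟩
    rw [← Fin.cons_snoc_eq_snoc_cons, gapWord_cons, eta_sub_pow_mul_vb_mul, ih, mul_smul_comm,
      smul_smul, ← pow_add, Fin.sum_cons, pow_add (-1 : ℤ) x, mul_assoc]
    congr 2
    omega

end

section Chains

variable {P : Type} [PartialOrder P]

lemma strictMono_snoc_iff {j : ℕ} {g : Fin (j + 1) → P} {b : P} :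
    StrictMono (Fin.snoc g b : Fin (j + 2) → P) ↔ StrictMono g ∧ g (Fin.last j) < b := by
  rw [← Fin.insertNth_last', Fin.strictMono_insertNth_iff]
  refine ⟨fun ⟨hg, hlt, _⟩ => ⟨hg, hlt _ (Fin.castSucc_lt_last _)⟩, fun ⟨hg, hlt⟩ => ?_⟩
  exact ⟨hg, fun i _ => (hg.monotone (Fin.le_last i)).trans_lt hlt,
    fun i hi => absurd hi (Fin.castSucc_lt_last i).not_ge⟩

variable [Fintype P]

variable (P) in
def chains (j : ℕ) (a b : P) : Finset (Fin (j + 1) → P) :=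
  {f | StrictMono f ∧ f 0 = a ∧ f (Fin.last j) = b}

lemma mem_chains {j : ℕ} {a b : P} {f : Fin (j + 1) → P} :
    f ∈ chains P j a b ↔ StrictMono f ∧ f 0 = a ∧ f (Fin.last j) = b := by
  simp [chains]

lemma chains_eq_empty {j : ℕ} (a b : P) (h : Fintype.card P ≤ j) : chains P j a b = ∅ := by
  refine Finset.eq_empty_of_forall_notMem fun f hf => ?_
  have := Fintype.card_le_of_injective f (mem_chains.1 hf).1.injective
  simp at this
  omega

lemma card_chains_zero (a b : P) : (chains P 0 a b).card = if a = b then 1 else 0 := by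
  split_ifs with hab
  · subst hab
    refine Finset.card_eq_one.2 ⟨fun _ => a, Finset.eq_singleton_iff_unique_mem.2 ⟨?_, ?_⟩⟩
    · exact mem_chains.2 ⟨Subsingleton.strictMono (α := Fin 1) _, rfl, rfl⟩
    · intro f hf
      funext i
      rw [Subsingleton.elim (α := Fin 1) i 0, (mem_chains.1 hf).2.1]
  · refine Finset.card_eq_zero.2 (Finset.eq_empty_of_forall_notMem fun f hf => hab ?_)
    obtain ⟨-, h0, hlast⟩ := mem_chains.1 hf
    rw [← h0, ← hlast]
    rfl

lemma sum_range_card_succ_chains (G : ℕ → ℤ) (a b : P) :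
    ∑ j ∈ Finset.range (Fintype.card P + 1), G j * (chains P j a b).card
      = ∑ j ∈ Finset.range (Fintype.card P), G j * (chains P j a b).card := by
  rw [Finset.sum_range_succ, chains_eq_empty a b le_rfl, Finset.card_empty, Nat.cast_zero,
    mul_zero, add_zero]

lemma psiI_one_eq_sum_chains (ρ : P → ℕ) (lo hi : P) :
    PsiI ρ (fun _ _ => (1 : ℤ)) lo hi
      = ∑ k ∈ Finset.range (Fintype.card P + 1), ∑ f ∈ chains P k lo hi, wtChain ρ f := by
  unfold PsiI
  refine Finset.sum_congr rfl fun k _ => ?_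
  simp [chains, Finset.sum_filter, zetaChain]

variable [LocallyFiniteOrder P]

lemma sum_chains_succ {M : Type*} [AddCommMonoid M] (j : ℕ) (a b : P)
    (F : (Fin (j + 2) → P) → M) :
    ∑ f ∈ chains P (j + 1) a b, F f
      = ∑ z ∈ Finset.Ico a b, ∑ g ∈ chains P j a z, F (Fin.snoc g b) := by
  rw [← Finset.sum_fiberwise_of_maps_to (g := fun f => f (Fin.last j).castSucc)
    (t := Finset.Ico a b)]
  · refine Finset.sum_congr rfl fun z hz => ?_
    refine Finset.sum_nbij' Fin.init (Fin.snoc · b) ?_ ?_ ?_ ?_ ?_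
    · intro f hf
      obtain ⟨hchain, rfl⟩ := Finset.mem_filter.1 hf
      obtain ⟨hmono, h0, -⟩ := mem_chains.1 hchain
      exact mem_chains.2 ⟨hmono.comp (Fin.strictMono_castSucc), h0, rfl⟩
    · intro g hg
      obtain ⟨hmono, h0, hlast⟩ := mem_chains.1 hg
      refine Finset.mem_filter.2 ⟨mem_chains.2 ⟨strictMono_snoc_iff.2 ⟨hmono, ?_⟩, ?_, ?_⟩, ?_⟩
      · rw [hlast]
        exact (Finset.mem_Ico.1 hz).2
      · rw [← Fin.castSucc_zero, Fin.snoc_castSucc, h0]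
      · simp
      · simpa using hlast
    · intro f hf
      rw [← (mem_chains.1 (Finset.mem_filter.1 hf).1).2.2, Fin.snoc_init_self]
    · intro g _
      exact Fin.init_snoc _ _
    · intro f hf
      rw [← (mem_chains.1 (Finset.mem_filter.1 hf).1).2.2, Fin.snoc_init_self]
  · intro f hf
    obtain ⟨hf, h0, hlast⟩ := mem_chains.1 hf
    refine Finset.mem_Ico.2 ⟨?_, ?_⟩
    · rw [← h0]
      exact hf.monotone (Fin.zero_le _)
    · rw [← hlast]
      exact hf (Fin.castSucc_lt_last _)

lemma card_chains_succ (j : ℕ) (a b : P) :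
    (chains P (j + 1) a b).card = ∑ z ∈ Finset.Ico a b, (chains P j a z).card := by
  simp only [Finset.card_eq_sum_ones]
  exact sum_chains_succ j a b fun _ => 1

/-- Philip Hall's theorem. -/
theorem sum_neg_one_pow_mul_card_chains [DecidableEq P] (a b : P) :
    ∑ j ∈ Finset.range (Fintype.card P), (-1 : ℤ) ^ j * (chains P j a b).card
      = IncidenceAlgebra.mu ℤ a b := by
  induction b using WellFoundedLT.induction with
  | _ b ih =>
    rw [← sum_range_card_succ_chains, Finset.sum_range_succ', card_chains_zero]
    by_cases hab : a = b
    · subst hab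
      simp [card_chains_succ]
    · rw [if_neg hab, IncidenceAlgebra.mu_eq_neg_sum_Ico_of_ne hab]
      simp only [card_chains_succ, Nat.cast_sum, Finset.mul_sum, pow_succ]
      rw [Finset.sum_comm, ← Finset.sum_congr rfl fun z hz => ih z (Finset.mem_Ico.1 hz).2]
      simp [Finset.sum_neg_distrib]

end Chains

section Gaps

variable {P : Type}

def rankGaps (ρ : P → ℕ) {k : ℕ} (f : Fin (k + 1) → P) : Fin k → ℕ :=
  fun i => ρ (f i.succ) - ρ (f i.castSucc) - 1

lemma wtChain_eq_gapWord (ρ : P → ℕ) {k : ℕ} (f : Fin (k + 1) → P) :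
    wtChain ρ f = gapWord (rankGaps ρ f) := rfl

lemma rankGaps_snoc (ρ : P → ℕ) {k : ℕ} (g : Fin (k + 1) → P) (x : P) :
    rankGaps ρ (Fin.snoc g x : Fin (k + 2) → P)
      = Fin.snoc (rankGaps ρ g) (ρ x - ρ (g (Fin.last k)) - 1) := by
  funext i
  cases i using Fin.lastCases with
  | last => simp [rankGaps]
  | cast i => simp only [rankGaps, Fin.succ_castSucc, Fin.snoc_castSucc]

lemma sum_rankGaps_add (ρ : P → ℕ) {k : ℕ} (f : Fin (k + 1) → P) (hf : StrictMono (ρ ∘ f)) :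
    ∑ i, rankGaps ρ f i + k + ρ (f 0) = ρ (f (Fin.last k)) := by
  induction k with
  | zero => simp
  | succ k ih =>
    have hsnoc := rankGaps_snoc ρ (Fin.init f) (f (Fin.last (k + 1)))
    rw [Fin.snoc_init_self] at hsnoc
    have hinit := ih (Fin.init f) (hf.comp Fin.strictMono_castSucc)
    have hlt : ρ (f (Fin.last k).castSucc) < ρ (f (Fin.last (k + 1))) :=
      hf (Fin.castSucc_lt_last _)
    simp only [Fin.init, Fin.castSucc_zero] at hinit hsnoc
    rw [hsnoc, Fin.sum_snoc]
    omega

end Gaps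

section Bounded

variable {P : Type} [Fintype P] [PartialOrder P] [BoundedOrder P]

lemma eta_wtChain_snoc_top {n : ℕ} {ρ : P → ℕ} (hρ : StrictMono ρ) (hbot : ρ ⊥ = 0)
    (htop : ρ ⊤ = n + 1) {j : ℕ} {z : P} {g : Fin (j + 1) → P} (hg : g ∈ chains P j ⊥ z)
    (hz : z < ⊤) :
    etaOp (wtChain ρ (Fin.snoc g ⊤ : Fin (j + 2) → P))
      = ((-1 : ℤ) ^ j * ((-1) ^ ρ z + (-1) ^ n)) • (va - vb) ^ n := by
  obtain ⟨hmono, h0, hlast⟩ := mem_chains.1 hg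
  have hsum := sum_rankGaps_add ρ g (hρ.comp hmono)
  rw [h0, hbot, hlast, add_zero] at hsum
  have hlt : ρ z < n + 1 := htop ▸ hρ hz
  obtain ⟨t, rfl⟩ : ∃ t, n = ρ z + t := ⟨n - ρ z, by omega⟩
  rw [wtChain_eq_gapWord, rankGaps_snoc, etaOp_eq_linearExtension, eta_gapWord_snoc, hlast, htop,
    show ρ z + t + 1 - ρ z - 1 = t by omega, ← hsum]
  have hj : (-1 : ℤ) ^ j * (-1) ^ j = 1 := by
    rw [← pow_add, Even.neg_one_pow ⟨j, rfl⟩]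
  congr 1
  linear_combination (-(-1 : ℤ) ^ (∑ i, rankGaps ρ g i) * (1 + (-1) ^ t)) * hj

variable [LocallyFiniteOrder P] [DecidableEq P]

lemma sum_Ico_mul_mu_eq {n : ℕ} {ρ : P → ℕ} (htop : ρ ⊤ = n + 1) (hbt : (⊥ : P) ≠ ⊤) :
    ∑ z ∈ Finset.Ico (⊥ : P) ⊤, ((-1 : ℤ) ^ ρ z + (-1) ^ n) * IncidenceAlgebra.mu ℤ ⊥ z
      = ∑ x : P, (-1 : ℤ) ^ ρ x * IncidenceAlgebra.mu ℤ ⊥ x := by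
  have hmu := IncidenceAlgebra.mu_eq_neg_sum_Ico_of_ne (𝕜 := ℤ) hbt
  have huniv : (Finset.univ : Finset P) = insert ⊤ (Finset.Ico ⊥ ⊤) := by
    ext x
    simp
  rw [huniv, Finset.sum_insert (by simp), htop]
  simp only [add_mul, Finset.sum_add_distrib, ← Finset.mul_sum]
  rw [hmu, pow_succ]
  ring

end Bounded

end

/-- `η(Ψ(P)) = Z(P) · (a-b)^n` for a graded poset of rank `n+1`,
where `Z(P) = Σ_x (-1)^{ρ(x)} μ(0̂,x)` is the Zaslavsky invariant. -/
theorem eta_abIndex {P : Type} [Fintype P] [PartialOrder P] [BoundedOrder P]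
    [DecidableEq P] [LocallyFiniteOrder P]
    (n : ℕ) (ρ : P → ℕ) (hbot : ρ ⊥ = 0) (htop : ρ ⊤ = n + 1)
    (hgrade : ∀ x y : P, x ⋖ y → ρ y = ρ x + 1) :
    etaOp (PsiI ρ (fun _ _ => (1 : ℤ)) ⊥ ⊤)
      = (∑ x : P, (-1 : ℤ) ^ (ρ x) * IncidenceAlgebra.mu ℤ (⊥ : P) x) • (va - vb) ^ n := by
  have hρ : StrictMono ρ :=
    (strictMono_iff_forall_covBy ρ).2 fun x y h => by rw [hgrade x y h]; omega
  have hbt : (⊥ : P) ≠ ⊤ := fun h => by rw [h, htop] at hbot; omega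
  have hchains₀ : chains P 0 (⊥ : P) ⊤ = ∅ := by
    rw [← Finset.card_eq_zero, card_chains_zero, if_neg hbt]
  let X : P → ℤ := fun z => (-1) ^ ρ z + (-1) ^ n
  calc etaOp (PsiI ρ (fun _ _ => (1 : ℤ)) ⊥ ⊤)
      = ∑ j ∈ Finset.range (Fintype.card P), ∑ z ∈ Finset.Ico (⊥ : P) ⊤,
          ∑ g ∈ chains P j ⊥ z, ((-1 : ℤ) ^ j * X z) • (va - vb) ^ n := by
        rw [psiI_one_eq_sum_chains, etaOp_sum, Finset.sum_range_succ', hchains₀, etaOp_sum,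
          Finset.sum_empty, add_zero]
        refine Finset.sum_congr rfl fun j _ => ?_
        rw [etaOp_sum, sum_chains_succ]
        refine Finset.sum_congr rfl fun z hz => Finset.sum_congr rfl fun g hg => ?_
        exact eta_wtChain_snoc_top hρ hbot htop hg (Finset.mem_Ico.1 hz).2
    _ = (∑ z ∈ Finset.Ico (⊥ : P) ⊤, X z * IncidenceAlgebra.mu ℤ ⊥ z) • (va - vb) ^ n := by
        simp only [← sum_neg_one_pow_mul_card_chains, Finset.mul_sum, Finset.sum_smul]
        rw [Finset.sum_comm]
        refine Finset.sum_congr rfl fun z _ => Finset.sum_congr rfl fun j _ => ?_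
        rw [Finset.sum_const, ← Nat.cast_smul_eq_nsmul ℤ, smul_smul]
        congr 1
        ring
    _ = _ := by rw [sum_Ico_mul_mu_eq htop hbt]
end

section
/- For a quasi-graded poset (P, ρ, ζ̄), the ab-index is a coalgebra map: Δ(Ψ(P, ρ, ζ̄)) = Σ_{0̂ < x < 1̂} Ψ([0̂, x], ρ, ζ̄) ⊗ Ψ([x, 1̂], ρ_x, ζ̄), where ρ_x(y) = ρ(y) − ρ(x). -/
open scoped TensorProduct
open scoped Classical

/-!
`Delta` obeys the Leibniz rule `Δ(uv) = Δu · (1 ⊗ v) + (u ⊗ 1) · Δv` and `Δa = Δb = 1 ⊗ 1`, so it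
kills every power of `a - b` and sends `(a - b)^e b` to `(a - b)^e ⊗ 1`. Hence `Δ` of the weight
of a chain `lo = x₀ < ⋯ < x_k = hi` is the sum, over its interior elements `x_m`, of the tensor
product of the weights of the halves `x₀ < ⋯ < x_m` and `x_m < ⋯ < x_k`, while `ζ̄` of the chain is
the product of `ζ̄` of the halves. Cutting at an interior element is a bijection onto pairs of
chains meeting at a point strictly between `lo` and `hi`; this proves the identity for every
interval `[lo, hi]`.
-/

noncomputable section

theorem Finset.sum_Ioo_zero_add_one_add_one {M : Type*} [AddCommMonoid M] (f : ℕ → M) (n : ℕ) :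
    ∑ i ∈ Finset.Ioo 0 (n + 1 + 1), f i = f 1 + ∑ i ∈ Finset.Ioo 0 (n + 1), f (i + 1) := by
  rw [← Finset.Ico_add_one_left_eq_Ioo, ← Finset.Ico_add_one_left_eq_Ioo,
    Finset.sum_eq_sum_Ico_succ_bot (by omega), Finset.sum_Ico_add']
  rfl

theorem Finset.sum_range_sum_Ioo_eq_sum_range_sum_range {M : Type*} [AddCommMonoid M]
    {n : ℕ} (F : ℕ → ℕ → M) (hF : ∀ k m, n ≤ k → F k m = 0) :
    ∑ k ∈ Finset.range n, ∑ m ∈ Finset.Ioo 0 k, F k m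
      = ∑ i ∈ Finset.range n, ∑ j ∈ Finset.range n,
          if 0 < i ∧ 0 < j then F (i + j) i else 0 := by
  set G : ℕ → ℕ → M := fun i j => if 0 < i ∧ 0 < j then F (i + j) i else 0
  have hIoo : ∀ k, ∑ m ∈ Finset.Ioo 0 k, F k m = ∑ m ∈ Finset.range (k + 1), G m (k - m) := by
    intro k
    rw [← Finset.inter_eq_right.mpr (fun m hm => Finset.mem_range.mpr
      (by have := (Finset.mem_Ioo.mp hm).2; omega) : Finset.Ioo 0 k ⊆ Finset.range (k + 1)),
      ← Finset.sum_ite_mem]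
    refine Finset.sum_congr rfl fun m hm => ?_
    have hmk := Finset.mem_range.mp hm
    simp only [G, Finset.mem_Ioo, Nat.add_sub_cancel' (Nat.lt_succ_iff.mp hmk)]
    exact if_congr (by omega) rfl rfl
  have hextend : ∀ i, ∑ j ∈ Finset.range (n - i), G i j = ∑ j ∈ Finset.range n, G i j := by
    intro i
    refine Finset.sum_subset (Finset.range_subset_range.mpr (Nat.sub_le n i)) fun j _ hj => ?_
    simp only [G, hF (i + j) i (by simp at hj; omega), ite_self]
  rw [Finset.sum_congr rfl fun k _ => hIoo k, Finset.sum_range_diag_flip]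
  exact Finset.sum_congr rfl fun i _ => hextend i

namespace Delta

def onMonomial (w : FreeMonoid Bool) : Alg ⊗[ℤ] Alg :=
  ∑ i ∈ Finset.range (FreeMonoid.toList w).length,
    monoOf ((FreeMonoid.toList w).take i) ⊗ₜ[ℤ] monoOf ((FreeMonoid.toList w).drop (i + 1))

def linearMap : Alg →ₗ[ℤ] Alg ⊗[ℤ] Alg :=
  Finsupp.lsum ℤ (fun w => LinearMap.toSpanSingleton ℤ _ (onMonomial w)) ∘ₗ
    (MonoidAlgebra.coeffLinearEquiv ℤ).toLinearMap

end Delta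

theorem Delta_eq_linearMap (x : Alg) : Delta x = Delta.linearMap x := rfl

theorem Delta_add (x y : Alg) : Delta (x + y) = Delta x + Delta y := by
  simp only [Delta_eq_linearMap, map_add]

theorem Delta_sub (x y : Alg) : Delta (x - y) = Delta x - Delta y := by
  simp only [Delta_eq_linearMap, map_sub]

theorem Delta_sum {ι : Type*} (s : Finset ι) (F : ι → Alg) :
    Delta (∑ i ∈ s, F i) = ∑ i ∈ s, Delta (F i) := by
  simp only [Delta_eq_linearMap, map_sum]

theorem Delta_zsmul (c : ℤ) (x : Alg) : Delta (c • x) = c • Delta x := by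
  simp only [Delta_eq_linearMap, map_smul]

theorem Delta_monoOf (l : List Bool) :
    Delta (monoOf l) = ∑ i ∈ Finset.range l.length,
      monoOf (l.take i) ⊗ₜ[ℤ] monoOf (l.drop (i + 1)) := by
  change Finsupp.lsum ℤ (fun w => LinearMap.toSpanSingleton ℤ _ (Delta.onMonomial w))
    (Finsupp.single (FreeMonoid.ofList l) (1 : ℤ)) = _
  simp [Delta.onMonomial]

theorem monoOf_append (u v : List Bool) : monoOf (u ++ v) = monoOf u * monoOf v :=
  map_mul _ _ _

theorem monoOf_nil : monoOf [] = 1 := map_one _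

theorem single_eq_zsmul_monoOf (w : FreeMonoid Bool) (c : ℤ) :
    (MonoidAlgebra.single w c : Alg) = c • monoOf (FreeMonoid.toList w) := by
  rw [monoOf, MonoidAlgebra.of_apply, MonoidAlgebra.smul_single', mul_one]
  rfl

theorem Delta_monoOf_append (u v : List Bool) :
    Delta (monoOf (u ++ v))
      = Delta (monoOf u) * (1 ⊗ₜ[ℤ] monoOf v) + (monoOf u ⊗ₜ[ℤ] 1) * Delta (monoOf v) := by
  rw [Delta_monoOf, Delta_monoOf, Delta_monoOf, List.length_append, Finset.sum_range_add,
    Finset.sum_mul, Finset.mul_sum]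
  congr 1
  · refine Finset.sum_congr rfl fun i hi => ?_
    rw [Finset.mem_range] at hi
    rw [Algebra.TensorProduct.tmul_mul_tmul, mul_one, List.take_append_of_le_length hi.le,
      List.drop_append_of_le_length hi, monoOf_append]
  · refine Finset.sum_congr rfl fun i _ => ?_
    rw [Algebra.TensorProduct.tmul_mul_tmul, one_mul, List.take_length_add_append,
      add_assoc, List.drop_length_add_append, monoOf_append]

theorem Delta_mul (x y : Alg) :
    Delta (x * y) = Delta x * (1 ⊗ₜ[ℤ] y) + (x ⊗ₜ[ℤ] 1) * Delta y := by
  induction x using MonoidAlgebra.induction_linear generalizing y with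
  | zero => simp [Delta_eq_linearMap]
  | add a b ha hb =>
    simp only [add_mul, Delta_add, ha, hb, TensorProduct.add_tmul]
    abel
  | single u c =>
    induction y using MonoidAlgebra.induction_linear with
    | zero => simp [Delta_eq_linearMap]
    | add a b ha hb =>
      simp only [mul_add, Delta_add, ha, hb, TensorProduct.tmul_add]
      abel
    | single w d =>
      simp only [single_eq_zsmul_monoOf, ← monoOf_append, Delta_zsmul,
        Delta_monoOf_append, smul_add, TensorProduct.tmul_smul, ← TensorProduct.smul_tmul',
        mul_smul_comm, smul_mul_assoc, smul_smul, mul_comm d c]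

theorem Delta_one : Delta 1 = 0 := by
  simpa [monoOf_nil] using Delta_monoOf []

theorem Delta_va : Delta va = 1 ⊗ₜ[ℤ] 1 := by
  change Delta (monoOf [false]) = _
  simpa [monoOf_nil] using Delta_monoOf [false]

theorem Delta_vb : Delta vb = 1 ⊗ₜ[ℤ] 1 := by
  change Delta (monoOf [true]) = _
  simpa [monoOf_nil] using Delta_monoOf [true]

theorem Delta_va_sub_vb_pow (n : ℕ) : Delta ((va - vb) ^ n) = 0 := by
  induction n with
  | zero => rw [pow_zero, Delta_one]
  | succ n ih => rw [pow_succ, Delta_mul, ih, Delta_sub, Delta_va, Delta_vb]; simp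

theorem Delta_va_sub_vb_pow_mul_vb (n : ℕ) :
    Delta ((va - vb) ^ n * vb) = ((va - vb) ^ n) ⊗ₜ[ℤ] 1 := by
  rw [Delta_mul, Delta_va_sub_vb_pow, Delta_vb, zero_mul, zero_add,
    Algebra.TensorProduct.tmul_mul_tmul, mul_one, one_mul]

/-- `(a-b)^e₀ b (a-b)^e₁ b ⋯ b (a-b)^eₖ₋₁`: the weight of a chain whose rank jumps exceed one
by `e₀, …, eₖ₋₁`. -/
def abWord : List ℕ → Alg
  | [] => 1
  | [e] => (va - vb) ^ e
  | e :: e' :: L => (va - vb) ^ e * vb * abWord (e' :: L)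

theorem Delta_abWord (L : List ℕ) :
    Delta (abWord L)
      = ∑ i ∈ Finset.Ioo 0 L.length, abWord (L.take i) ⊗ₜ[ℤ] abWord (L.drop i) := by
  match L with
  | [] => simp [abWord, Delta_one]
  | [e] => simp [abWord, Delta_va_sub_vb_pow, show Finset.Ioo 0 1 = ∅ from rfl]
  | e :: e' :: L =>
    rw [abWord, Delta_mul, Delta_va_sub_vb_pow_mul_vb, Delta_abWord (e' :: L),
      Algebra.TensorProduct.tmul_mul_tmul, mul_one, one_mul, Finset.mul_sum]
    simp only [List.length_cons, Finset.sum_Ioo_zero_add_one_add_one]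
    congr 1
    refine Finset.sum_congr rfl fun i hi => ?_
    obtain ⟨j, rfl⟩ := Nat.exists_eq_add_one_of_ne_zero (Finset.mem_Ioo.mp hi).1.ne'
    rw [Algebra.TensorProduct.tmul_mul_tmul, one_mul]
    simp [abWord, mul_assoc]

theorem prod_ofFn_eq_abWord {k : ℕ} (e : Fin k → ℕ) :
    (List.ofFn fun i : Fin k => (va - vb) ^ e i * if (i : ℕ) + 1 < k then vb else 1).prod
      = abWord (List.ofFn e) := by
  match k, e with
  | 0, _ => simp [abWord]
  | 1, e => simp [abWord]
  | k + 2, e =>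
    conv_rhs => rw [List.ofFn_succ, List.ofFn_succ, abWord,
      ← List.ofFn_succ (f := fun i : Fin (k + 1) => e i.succ), ← prod_ofFn_eq_abWord]
    rw [List.ofFn_succ, List.prod_cons]
    simp [mul_assoc]

section Chains

variable {P : Type}

def chainLinks {k : ℕ} (f : Fin (k + 1) → P) : List (P × P) :=
  List.ofFn fun i : Fin k => (f i.castSucc, f i.succ)

def linkGap (ρ : P → ℕ) (p : P × P) : ℕ := ρ p.2 - ρ p.1 - 1

theorem wtChain_eq_abWord (ρ : P → ℕ) {k : ℕ} (f : Fin (k + 1) → P) :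
    wtChain ρ f = abWord ((chainLinks f).map (linkGap ρ)) := by
  rw [wtChain, prod_ofFn_eq_abWord, chainLinks, List.map_ofFn]
  rfl

theorem zetaChain_eq_prod (zb : P → P → ℤ) {k : ℕ} (f : Fin (k + 1) → P) :
    zetaChain zb f = ((chainLinks f).map (Function.uncurry zb)).prod := by
  simp [zetaChain, chainLinks, List.prod_ofFn]

theorem strictMono_iff_chainLinks [Preorder P] {k : ℕ} (f : Fin (k + 1) → P) :
    StrictMono f ↔ ∀ p ∈ chainLinks f, p.1 < p.2 := by
  simp [Fin.strictMono_iff_lt_succ, chainLinks, List.mem_ofFn]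

theorem add_one_le_card_of_strictMono [Fintype P] [Preorder P] {k : ℕ} {f : Fin (k + 1) → P} (hf : StrictMono f) :
    k + 1 ≤ Fintype.card P := by
  simpa using Fintype.card_le_of_injective f hf.injective

section Split

variable {k₁ k₂ : ℕ}

def chainPrefix (f : Fin (k₁ + k₂ + 1) → P) : Fin (k₁ + 1) → P :=
  fun i => f (Fin.castLE (by omega) i)

def chainSuffix (f : Fin (k₁ + k₂ + 1) → P) : Fin (k₂ + 1) → P :=
  fun i => f (Fin.natAdd k₁ i)

/-- Drops `g (Fin.last k₁)`, so it concatenates `g` and `h` only when `h 0 = g (Fin.last k₁)`. -/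
def chainAppend (g : Fin (k₁ + 1) → P) (h : Fin (k₂ + 1) → P) : Fin (k₁ + k₂ + 1) → P :=
  (Fin.append (Fin.init g) h : Fin (k₁ + (k₂ + 1)) → P)

theorem chainLinks_chainPrefix (f : Fin (k₁ + k₂ + 1) → P) :
    chainLinks (chainPrefix f) = (chainLinks f).take k₁ := by
  refine List.ext_getElem (by simp [chainLinks]) fun i h₁ h₂ => ?_
  simp [chainLinks, chainPrefix]

theorem chainLinks_chainSuffix (f : Fin (k₁ + k₂ + 1) → P) :
    chainLinks (chainSuffix f) = (chainLinks f).drop k₁ := by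
  refine List.ext_getElem (by simp [chainLinks]) fun i h₁ h₂ => ?_
  simp [chainLinks, chainSuffix, Nat.add_assoc]

theorem chainLinks_eq_append (f : Fin (k₁ + k₂ + 1) → P) :
    chainLinks f = chainLinks (chainPrefix f) ++ chainLinks (chainSuffix f) := by
  rw [chainLinks_chainPrefix, chainLinks_chainSuffix, List.take_append_drop]

theorem chainSuffix_zero (f : Fin (k₁ + k₂ + 1) → P) :
    chainSuffix f 0 = chainPrefix f (Fin.last k₁) := rfl

theorem chainAppend_chainPrefix_chainSuffix (f : Fin (k₁ + k₂ + 1) → P) :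
    chainAppend (chainPrefix f) (chainSuffix f) = f :=
  Fin.append_castAdd_natAdd (m := k₁) (n := k₂ + 1)

theorem chainPrefix_chainAppend {g : Fin (k₁ + 1) → P} {h : Fin (k₂ + 1) → P}
    (hgh : h 0 = g (Fin.last k₁)) : chainPrefix (chainAppend g h) = g := by
  funext i
  induction i using Fin.lastCases with
  | last => exact (Fin.append_right _ _ 0).trans hgh
  | cast j => exact Fin.append_left _ _ j

theorem chainSuffix_chainAppend (g : Fin (k₁ + 1) → P) (h : Fin (k₂ + 1) → P) :
    chainSuffix (chainAppend g h) = h :=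
  funext fun i => Fin.append_right _ _ i

theorem zetaChain_eq_mul (zb : P → P → ℤ) (f : Fin (k₁ + k₂ + 1) → P) :
    zetaChain zb f = zetaChain zb (chainPrefix f) * zetaChain zb (chainSuffix f) := by
  rw [zetaChain_eq_prod, zetaChain_eq_prod, zetaChain_eq_prod, chainLinks_eq_append f,
    List.map_append, List.prod_append]

theorem wtChain_chainPrefix (ρ : P → ℕ) (f : Fin (k₁ + k₂ + 1) → P) :
    wtChain ρ (chainPrefix f) = abWord (((chainLinks f).map (linkGap ρ)).take k₁) := by
  rw [wtChain_eq_abWord, chainLinks_chainPrefix, List.map_take]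

theorem wtChain_chainSuffix (ρ : P → ℕ) (f : Fin (k₁ + k₂ + 1) → P) :
    wtChain ρ (chainSuffix f) = abWord (((chainLinks f).map (linkGap ρ)).drop k₁) := by
  rw [wtChain_eq_abWord, chainLinks_chainSuffix, List.map_drop]

theorem strictMono_chainAppend [Preorder P] {g : Fin (k₁ + 1) → P} {h : Fin (k₂ + 1) → P}
    (hg : StrictMono g) (hh : StrictMono h) (hgh : h 0 = g (Fin.last k₁)) :
    StrictMono (chainAppend g h) := by
  rw [strictMono_iff_chainLinks] at hg hh ⊢
  rw [chainLinks_eq_append, chainPrefix_chainAppend hgh, chainSuffix_chainAppend]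
  simpa [or_imp, forall_and] using And.intro hg hh

end Split

end Chains

section Intervals

variable {P : Type} [Fintype P] [PartialOrder P]

abbrev IsChainBetween {k : ℕ} (f : Fin (k + 1) → P) (lo hi : P) : Prop :=
  StrictMono f ∧ f 0 = lo ∧ f (Fin.last k) = hi

def splitChainSum (ρ : P → ℕ) (zb : P → P → ℤ) (lo hi : P) (k m : ℕ) : Alg ⊗[ℤ] Alg :=
  ∑ f : Fin (k + 1) → P, if IsChainBetween f lo hi then
    zetaChain zb f • (abWord (((chainLinks f).map (linkGap ρ)).take m) ⊗ₜ[ℤ]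
      abWord (((chainLinks f).map (linkGap ρ)).drop m)) else 0

theorem splitChainSum_eq_zero (ρ : P → ℕ) (zb : P → P → ℤ) (lo hi : P) {k : ℕ} (m : ℕ)
    (hk : Fintype.card P ≤ k) : splitChainSum ρ zb lo hi k m = 0 :=
  Finset.sum_eq_zero fun f _ => if_neg fun hf => by
    have := add_one_le_card_of_strictMono hf.1
    omega

theorem Delta_PsiI (ρ : P → ℕ) (zb : P → P → ℤ) (lo hi : P) :
    Delta (PsiI ρ zb lo hi) = ∑ k ∈ Finset.range (Fintype.card P + 1),
      ∑ m ∈ Finset.Ioo 0 k, splitChainSum ρ zb lo hi k m := by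
  rw [PsiI, Delta_sum]
  refine Finset.sum_congr rfl fun k _ => ?_
  rw [Delta_sum]
  unfold splitChainSum
  rw [Finset.sum_comm]
  refine Finset.sum_congr rfl fun f _ => ?_
  split_ifs
  · rw [Delta_zsmul, wtChain_eq_abWord, Delta_abWord, Finset.smul_sum]
    simp [chainLinks]
  · simp [Delta_eq_linearMap]

theorem PsiI_tmul_PsiI (ρ : P → ℕ) (zb : P → P → ℤ) (lo x hi : P) :
    PsiI ρ zb lo x ⊗ₜ[ℤ] PsiI ρ zb x hi
      = ∑ k₁ ∈ Finset.range (Fintype.card P + 1), ∑ k₂ ∈ Finset.range (Fintype.card P + 1),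
          ∑ g : Fin (k₁ + 1) → P, ∑ h : Fin (k₂ + 1) → P,
            if IsChainBetween g lo x ∧ IsChainBetween h x hi then
              (zetaChain zb g * zetaChain zb h) • (wtChain ρ g ⊗ₜ[ℤ] wtChain ρ h) else 0 := by
  rw [PsiI, PsiI, TensorProduct.sum_tmul]
  refine Finset.sum_congr rfl fun k₁ _ => ?_
  rw [TensorProduct.sum_tmul]
  simp only [TensorProduct.tmul_sum]
  rw [Finset.sum_comm]
  refine Finset.sum_congr rfl fun k₂ _ => Finset.sum_congr rfl fun g _ =>
    Finset.sum_congr rfl fun h _ => ?_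
  by_cases hg : IsChainBetween g lo x
  · by_cases hh : IsChainBetween h x hi
    · rw [if_pos hg, if_pos hh, if_pos ⟨hg, hh⟩, TensorProduct.smul_tmul_smul]
    · rw [if_neg hh, TensorProduct.tmul_zero]
      exact (if_neg fun c => hh c.2).symm
  · rw [if_neg hg, TensorProduct.zero_tmul]
    exact (if_neg fun c => hg c.1).symm

theorem sum_ite_isChainBetween_isChainBetween {M : Type*} [AddCommMonoid M] (s : Finset P)
    (lo hi : P) {k₁ k₂ : ℕ} (T : (Fin (k₁ + 1) → P) → (Fin (k₂ + 1) → P) → M) :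
    ∑ x ∈ s, ∑ g : Fin (k₁ + 1) → P, ∑ h : Fin (k₂ + 1) → P,
        (if IsChainBetween g lo x ∧ IsChainBetween h x hi then T g h else 0)
      = ∑ g : Fin (k₁ + 1) → P, ∑ h : Fin (k₂ + 1) → P,
          if IsChainBetween g lo (g (Fin.last k₁)) ∧ IsChainBetween h (g (Fin.last k₁)) hi ∧
            g (Fin.last k₁) ∈ s then T g h else 0 := by
  rw [Finset.sum_comm]
  refine Finset.sum_congr rfl fun g _ => ?_
  rw [Finset.sum_comm]
  refine Finset.sum_congr rfl fun h _ => ?_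
  have hx : ∀ x, (if IsChainBetween g lo x ∧ IsChainBetween h x hi then T g h else 0)
      = if g (Fin.last k₁) = x then (if IsChainBetween g lo (g (Fin.last k₁)) ∧
          IsChainBetween h (g (Fin.last k₁)) hi then T g h else 0) else 0 := by
    intro x
    by_cases hgx : g (Fin.last k₁) = x
    · subst hgx; rw [if_pos rfl]
    · simp [hgx]
  rw [Finset.sum_congr rfl fun x _ => hx x, Finset.sum_ite_eq]
  split_ifs <;> tauto

theorem sum_chainPairs_eq_splitChainSum (ρ : P → ℕ) (zb : P → P → ℤ) (lo hi : P)
    (k₁ k₂ : ℕ) :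
    ∑ g : Fin (k₁ + 1) → P, ∑ h : Fin (k₂ + 1) → P,
      (if IsChainBetween g lo (g (Fin.last k₁)) ∧ IsChainBetween h (g (Fin.last k₁)) hi ∧
          g (Fin.last k₁) ∈ Finset.univ.filter (fun x => lo < x ∧ x < hi) then
        (zetaChain zb g * zetaChain zb h) • (wtChain ρ g ⊗ₜ[ℤ] wtChain ρ h) else 0)
      = if 0 < k₁ ∧ 0 < k₂ then splitChainSum ρ zb lo hi (k₁ + k₂) k₁ else 0 := by
  by_cases hk : 0 < k₁ ∧ 0 < k₂
  swap
  · rw [if_neg hk]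
    refine Finset.sum_eq_zero fun g _ => Finset.sum_eq_zero fun h _ => if_neg ?_
    rintro ⟨⟨-, hg0, -⟩, ⟨-, hh0, hhl⟩, hx⟩
    rw [Finset.mem_filter] at hx
    rcases Nat.eq_zero_or_pos k₁ with rfl | _
    · exact hx.2.1.ne' hg0
    · obtain rfl : k₂ = 0 := by omega
      exact hx.2.2.ne (hh0.symm.trans hhl)
  rw [if_pos hk, splitChainSum, ← Finset.sum_product', ← Finset.sum_filter,
    ← Finset.sum_filter]
  symm
  refine Finset.sum_nbij' (fun f => (chainPrefix f, chainSuffix f))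
    (fun p => chainAppend p.1 p.2) ?_ ?_ ?_ ?_ ?_
  · intro f hf
    simp only [Finset.mem_filter, Finset.mem_product, Finset.mem_univ, true_and] at hf ⊢
    obtain ⟨hmono, h0, hlast⟩ := hf
    refine ⟨⟨hmono.comp (Fin.strictMono_castLE _), h0, rfl⟩,
      ⟨hmono.comp (Fin.strictMono_natAdd _), chainSuffix_zero f, hlast⟩, ?_, ?_⟩
    · rw [← h0]
      exact hmono (Fin.lt_def.mpr (by simpa using hk.1))
    · rw [← hlast]
      exact hmono (Fin.lt_def.mpr (by simpa using hk.2))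
  · rintro ⟨g, h⟩ hp
    simp only [Finset.mem_filter, Finset.mem_product, Finset.mem_univ, true_and] at hp ⊢
    obtain ⟨⟨hg, hg0, -⟩, ⟨hh, hh0, hhl⟩, -⟩ := hp
    exact ⟨strictMono_chainAppend hg hh hh0,
      (congrFun (chainPrefix_chainAppend hh0) 0).trans hg0,
      (congrFun (chainSuffix_chainAppend g h) (Fin.last k₂)).trans hhl⟩
  · intro f _
    exact chainAppend_chainPrefix_chainSuffix f
  · rintro ⟨g, h⟩ hp
    simp only [Finset.mem_filter] at hp
    exact Prod.ext (chainPrefix_chainAppend hp.2.2.1.2.1) (chainSuffix_chainAppend g h)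
  · intro f _
    rw [zetaChain_eq_mul, wtChain_chainPrefix, wtChain_chainSuffix]

theorem Delta_PsiI_eq_sum_tmul (ρ : P → ℕ) (zb : P → P → ℤ) (lo hi : P) :
    Delta (PsiI ρ zb lo hi)
      = ∑ x ∈ Finset.univ.filter (fun x : P => lo < x ∧ x < hi),
          PsiI ρ zb lo x ⊗ₜ[ℤ] PsiI ρ zb x hi := by
  rw [Delta_PsiI, Finset.sum_range_sum_Ioo_eq_sum_range_sum_range (splitChainSum ρ zb lo hi)
    fun k m hk => splitChainSum_eq_zero ρ zb lo hi m (by omega)]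
  simp only [PsiI_tmul_PsiI]
  rw [Finset.sum_comm (s := Finset.univ.filter fun x : P => lo < x ∧ x < hi)]
  refine Finset.sum_congr rfl fun k₁ _ => ?_
  rw [Finset.sum_comm (s := Finset.univ.filter fun x : P => lo < x ∧ x < hi)]
  refine Finset.sum_congr rfl fun k₂ _ => ?_
  rw [sum_ite_isChainBetween_isChainBetween, sum_chainPairs_eq_splitChainSum]

end Intervals

end

theorem abIndex_coalgebra_map_general {P : Type} [Fintype P] [PartialOrder P] [BoundedOrder P]
    (ρ : P → ℕ) (zb : P → P → ℤ) :
    Delta (PsiI ρ zb ⊥ ⊤)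
      = ∑ x ∈ Finset.univ.filter (fun x : P => ⊥ < x ∧ x < ⊤),
          PsiI ρ zb ⊥ x ⊗ₜ[ℤ] PsiI ρ zb x ⊤ :=
  Delta_PsiI_eq_sum_tmul ρ zb ⊥ ⊤

/-- the ab-index of a quasi-graded poset is a coalgebra map:
`Δ(Ψ(P)) = Σ_{0̂ < x < 1̂} Ψ([0̂,x]) ⊗ Ψ([x,1̂])`. -/
theorem abIndex_coalgebra_map {P : Type} [Fintype P] [PartialOrder P] [BoundedOrder P]
    (ρ : P → ℕ) (zb : P → P → ℤ) (hρ0 : ρ ⊥ = 0) (hρ : StrictMono ρ)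
    (hzb : ∀ x : P, zb x x = 1) :
    Delta (PsiI ρ zb ⊥ ⊤)
      = ∑ x ∈ Finset.univ.filter (fun x : P => ⊥ < x ∧ x < ⊤),
          PsiI ρ zb ⊥ x ⊗ₜ[ℤ] PsiI ρ zb x ⊤ :=
  abIndex_coalgebra_map_general ρ zb
end

section
/- Let (P, ρ, ζ̄) be an Eulerian quasi-graded poset, meaning Σ_{x ≤ y ≤ z} (−1)^{ρ(x,y)} ζ̄(x,y) ζ̄(y,z) = 0 for all x < z in P. Then the ab-index Ψ(P, ρ, ζ̄) can be written as a polynomial in c = a+b and d = ab+ba with integer coefficients. -/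
open scoped TensorProduct
open scoped Classical

/-!
Let `σ` be the involution of `ℤ⟨a, b⟩` exchanging `a` and `b`; it fixes `c` and `d`.
Since `a - b` is not a zero divisor, an element `s₀ + (a - b) s₁ + b s₂` with `sᵢ ∈ ℤ⟨c, d⟩`
that is fixed by `σ` has `s₂ = 2 s₁`, hence equals `s₀ + c s₁ ∈ ℤ⟨c, d⟩`. These elements are
stable under left multiplication by `a - b`, as `(a - b)² = c² - 2d` and `(a - b) b = d - b c`.

Splitting off the first step of a chain gives
`Ψ(x, z) = Σ_{x < y ≤ z} ζ̄(x, y) (a - b)^{ρ(x,y) - 1} (if y = z then 1 else b Ψ(y, z))`,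
so by downward induction on `x` it has the above shape. Applying `σ` turns `a - b` into `-(a - b)`
and `b` into `(a - b) + b`; expanding the new terms `(a - b)^{ρ(x,y)} Ψ(y, z)` once more and
applying the Eulerian relation on each interval `[x, w]` gives back exactly `Ψ(x, z)`.
-/

noncomputable section

namespace CDIndex

def swapAB : Alg →ₐ[ℤ] Alg :=
  MonoidAlgebra.lift ℤ Alg (FreeMonoid Bool) (FreeMonoid.lift fun s => if s then va else vb)

@[simp] lemma swapAB_va : swapAB va = vb := by
  simp [swapAB, va]

@[simp] lemma swapAB_vb : swapAB vb = va := by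
  simp [swapAB, vb]

lemma swapAB_sub : swapAB (va - vb) = -(va - vb) := by
  simp

def cd : Subalgebra ℤ Alg := Algebra.adjoin ℤ {va + vb, va * vb + vb * va}

lemma c_mem_cd : va + vb ∈ cd := Algebra.subset_adjoin (Set.mem_insert _ _)

lemma d_mem_cd : va * vb + vb * va ∈ cd := Algebra.subset_adjoin (Set.mem_insert_of_mem _ rfl)

lemma swapAB_eq_self_of_mem_cd {s : Alg} (hs : s ∈ cd) : swapAB s = s := by
  induction hs using Algebra.adjoin_induction with
  | mem x hx =>
    rcases hx with rfl | rfl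
    · simp [add_comm]
    · simp [add_comm]
  | algebraMap r => exact swapAB.commutes r
  | add x y _ _ hx hy => rw [map_add, hx, hy]
  | mul x y _ _ hx hy => rw [map_mul, hx, hy]

lemma sub_sq_mem_cd : (va - vb) ^ 2 ∈ cd := by
  have h : (va - vb) ^ 2 = (va + vb) ^ 2 - 2 • (va * vb + vb * va) := by noncomm_ring
  rw [h]
  exact sub_mem (pow_mem c_mem_cd 2) (zsmul_mem d_mem_cd 2)

lemma va_sub_vb_ne_zero : va - vb ≠ 0 := by
  intro h
  have h' := congrArg (fun x : Alg => x.coeff (FreeMonoid.of false)) (sub_eq_zero.mp h)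
  simp [va, vb, MonoidAlgebra.of_apply, FreeMonoid.of_injective.eq_iff] at h'

def cdExt : Submodule ℤ Alg where
  carrier := {u | ∃ s₀ ∈ cd, ∃ s₁ ∈ cd, ∃ s₂ ∈ cd, u = s₀ + (va - vb) * s₁ + vb * s₂}
  zero_mem' := ⟨0, zero_mem _, 0, zero_mem _, 0, zero_mem _, by simp⟩
  add_mem' := by
    rintro _ _ ⟨s₀, h₀, s₁, h₁, s₂, h₂, rfl⟩ ⟨t₀, g₀, t₁, g₁, t₂, g₂, rfl⟩
    exact ⟨s₀ + t₀, add_mem h₀ g₀, s₁ + t₁, add_mem h₁ g₁, s₂ + t₂, add_mem h₂ g₂, by noncomm_ring⟩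
  smul_mem' := by
    rintro n _ ⟨s₀, h₀, s₁, h₁, s₂, h₂, rfl⟩
    exact ⟨n • s₀, zsmul_mem h₀ n, n • s₁, zsmul_mem h₁ n, n • s₂, zsmul_mem h₂ n, by
      simp only [smul_add, mul_smul_comm]⟩

lemma one_mem_cdExt : (1 : Alg) ∈ cdExt :=
  ⟨1, one_mem _, 0, zero_mem _, 0, zero_mem _, by simp⟩

lemma vb_mul_mem_cdExt {s : Alg} (hs : s ∈ cd) : vb * s ∈ cdExt :=
  ⟨0, zero_mem _, 0, zero_mem _, s, hs, by simp⟩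

lemma sub_mul_mem_cdExt {u : Alg} (hu : u ∈ cdExt) : (va - vb) * u ∈ cdExt := by
  obtain ⟨s₀, h₀, s₁, h₁, s₂, h₂, rfl⟩ := hu
  refine ⟨(va - vb) ^ 2 * s₁ + (va * vb + vb * va) * s₂, add_mem (mul_mem sub_sq_mem_cd h₁)
    (mul_mem d_mem_cd h₂), s₀, h₀, -((va + vb) * s₂), neg_mem (mul_mem c_mem_cd h₂), ?_⟩
  noncomm_ring

lemma sub_pow_mul_mem_cdExt (n : ℕ) {u : Alg} (hu : u ∈ cdExt) : (va - vb) ^ n * u ∈ cdExt := by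
  induction n with
  | zero => simpa using hu
  | succ n ih => simpa [pow_succ', mul_assoc] using sub_mul_mem_cdExt ih

lemma mem_cd_of_mem_cdExt {u : Alg} (hu : u ∈ cdExt) (hσ : swapAB u = u) : u ∈ cd := by
  obtain ⟨s₀, h₀, s₁, h₁, s₂, h₂, rfl⟩ := hu
  have hσu : swapAB (s₀ + (va - vb) * s₁ + vb * s₂) = s₀ - (va - vb) * s₁ + va * s₂ := by
    simp only [map_add, map_mul, swapAB_sub, swapAB_vb, swapAB_eq_self_of_mem_cd h₀,
      swapAB_eq_self_of_mem_cd h₁, swapAB_eq_self_of_mem_cd h₂]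
    noncomm_ring
  have hs₂ : s₂ = 2 • s₁ := by
    have h : (va - vb) * (s₂ - 2 • s₁) = 0 := by
      rw [← sub_eq_zero.mpr (hσu.symm.trans hσ)]; noncomm_ring
    exact sub_eq_zero.mp ((mul_eq_zero.mp h).resolve_left va_sub_vb_ne_zero)
  have hu : s₀ + (va - vb) * s₁ + vb * s₂ = s₀ + (va + vb) * s₁ := by
    rw [hs₂]; noncomm_ring
  rw [hu]
  exact add_mem h₀ (mul_mem c_mem_cd h₁)

section Chains

variable {P : Type} (ρ : P → ℕ) (zb : P → P → ℤ)

lemma zetaChain_cons {k : ℕ} (y : P) (g : Fin (k + 1) → P) :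
    zetaChain zb (Fin.cons y g : Fin (k + 2) → P) = zb y (g 0) * zetaChain zb g := by
  simp [zetaChain, Fin.prod_univ_succ]

lemma wtChain_cons {k : ℕ} (y : P) (g : Fin (k + 1) → P) :
    wtChain ρ (Fin.cons y g : Fin (k + 2) → P)
      = (va - vb) ^ (ρ (g 0) - ρ y - 1) * (if 0 < k then vb else 1) * wtChain ρ g := by
  simp [wtChain, List.ofFn_succ, mul_assoc]

variable [Fintype P] [PartialOrder P]

def psiLayer (k : ℕ) (x z : P) : Alg :=
  ∑ f : Fin (k + 1) → P,
    if StrictMono f ∧ f 0 = x ∧ f (Fin.last k) = z then zetaChain zb f • wtChain ρ f else 0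

lemma PsiI_eq_sum_psiLayer (x z : P) :
    PsiI ρ zb x z = ∑ k ∈ Finset.range (Fintype.card P + 1), psiLayer ρ zb k x z := rfl

lemma psiLayer_zero (x z : P) : psiLayer ρ zb 0 x z = if x = z then 1 else 0 := by
  rw [psiLayer, ← (Equiv.funUnique (Fin 1) P).symm.sum_comp]
  by_cases h : x = z
  · subst h; simp [Subsingleton.strictMono, zetaChain, wtChain]
  · rw [if_neg h]
    exact Finset.sum_eq_zero fun p _ => if_neg fun ⟨_, hx, hz⟩ => h (hx.symm.trans hz)

lemma psiLayer_card (x z : P) : psiLayer ρ zb (Fintype.card P) x z = 0 := by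
  refine Finset.sum_eq_zero fun f _ => if_neg fun ⟨hf, _⟩ => ?_
  simpa using Fintype.card_le_of_injective f hf.injective

lemma psiLayer_succ_self (k : ℕ) (z : P) : psiLayer ρ zb (k + 1) z z = 0 :=
  Finset.sum_eq_zero fun _ _ => if_neg fun ⟨hf, h0, hl⟩ => (hf Fin.last_pos').ne (h0.trans hl.symm)

lemma PsiI_eq_psiLayer_zero_add (x z : P) :
    PsiI ρ zb x z = psiLayer ρ zb 0 x z
      + ∑ k ∈ Finset.range (Fintype.card P), psiLayer ρ zb (k + 1) x z := by
  rw [PsiI_eq_sum_psiLayer, Finset.sum_range_succ', add_comm]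

lemma PsiI_self (z : P) : PsiI ρ zb z z = 1 := by
  simp [PsiI_eq_psiLayer_zero_add, psiLayer_zero, psiLayer_succ_self]

lemma sum_psiLayer_eq (y z : P) :
    ∑ k ∈ Finset.range (Fintype.card P), (if 0 < k then vb else 1) * psiLayer ρ zb k y z
      = if y = z then 1 else vb * PsiI ρ zb y z := by
  have hcard : (if 0 < Fintype.card P then vb else 1) * psiLayer ρ zb (Fintype.card P) y z = 0 := by
    rw [psiLayer_card, mul_zero]
  rw [← add_zero (Finset.sum _ _), ← hcard, ← Finset.sum_range_succ, Finset.sum_range_succ',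
    PsiI_eq_psiLayer_zero_add]
  simp only [lt_irrefl, Nat.succ_pos, if_true, if_false, one_mul, ← Finset.mul_sum, psiLayer_zero]
  by_cases h : y = z
  · subst h; simp [psiLayer_succ_self]
  · simp [h]

/-- The weight of the chains from `x` to `z` whose first step is `x < y`, without `zb x y`. -/
def psiTerm (x y z : P) : Alg :=
  (va - vb) ^ (ρ y - ρ x - 1) * if y = z then 1 else vb * PsiI ρ zb y z

variable {ρ zb}

lemma swapAB_psiTerm (hρ : StrictMono ρ) {x y z : P} (hxy : x < y)
    (hfix : y ≠ z → swapAB (PsiI ρ zb y z) = PsiI ρ zb y z) :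
    swapAB (psiTerm ρ zb x y z) = -(-1 : ℤ) ^ (ρ y - ρ x) • (psiTerm ρ zb x y z
      + if y ≠ z then (va - vb) ^ (ρ y - ρ x) * PsiI ρ zb y z else 0) := by
  obtain ⟨m, hm⟩ : ∃ m, ρ y - ρ x = m + 1 := ⟨ρ y - ρ x - 1, by have := hρ hxy; omega⟩
  rw [psiTerm, hm, Nat.add_sub_cancel, map_mul, map_pow, swapAB_sub, neg_pow]
  by_cases hyz : y = z
  · simp [hyz, pow_succ]
  · simp only [hyz, if_false, ne_eq, not_false_eq_true, if_true, map_mul, swapAB_vb, hfix hyz,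
      zsmul_eq_mul, Int.cast_neg, Int.cast_pow, Int.cast_one]
    rw [pow_succ, pow_succ]
    noncomm_ring

end Chains

section Eulerian

variable {P : Type} [PartialOrder P] [LocallyFiniteOrder P] (ρ : P → ℕ) (zb : P → P → ℤ)

def IsEulerian : Prop :=
  ∀ x z : P, x < z → ∑ y ∈ Finset.Icc x z, (-1 : ℤ) ^ (ρ y - ρ x) * zb x y * zb y z = 0

variable {ρ zb}

lemma IsEulerian.sum_Ioo (he : IsEulerian ρ zb) (hzb : ∀ x, zb x x = 1) {x w : P} (hxw : x < w) :
    ∑ y ∈ Finset.Ioo x w, (-1 : ℤ) ^ (ρ y - ρ x) * zb x y * zb y w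
      = -(1 + (-1) ^ (ρ w - ρ x)) * zb x w := by
  have h := he x w hxw
  rw [Finset.Icc_eq_cons_Ico hxw.le, Finset.sum_cons, Finset.Ico_eq_cons_Ioo hxw,
    Finset.sum_cons] at h
  simp only [Nat.sub_self, pow_zero, one_mul, hzb] at h
  linear_combination h

end Eulerian

section Recursion

variable {P : Type} [Fintype P] [PartialOrder P] [LocallyFiniteOrder P] (ρ : P → ℕ) (zb : P → P → ℤ)

lemma psiLayer_succ (k : ℕ) (x z : P) :
    psiLayer ρ zb (k + 1) x z = ∑ y ∈ Finset.Ioc x z, zb x y •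
      ((va - vb) ^ (ρ y - ρ x - 1) * ((if 0 < k then vb else 1) * psiLayer ρ zb k y z)) := by
  rw [psiLayer, ← (Fin.consEquiv fun _ => P).sum_comp, Fintype.sum_prod_type,
    Finset.sum_eq_single x (fun y _ hy => Finset.sum_eq_zero fun g _ => if_neg ?_) (by simp)]
  · simp only [psiLayer, Finset.smul_sum, Finset.mul_sum, mul_ite, smul_ite, mul_zero, smul_zero]
    rw [Finset.sum_comm]
    refine Finset.sum_congr rfl fun g _ => ?_
    have hmono : StrictMono (Fin.cons x g : Fin (k + 2) → P) ↔ x < g 0 ∧ StrictMono g :=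
      strictMono_vecCons
    simp only [Fin.consEquiv, Equiv.coe_fn_mk, Fin.cons_zero, Fin.cons_last, zetaChain_cons,
      wtChain_cons, hmono, true_and]
    by_cases hg : StrictMono g ∧ g (Fin.last k) = z
    · have hgz : g 0 ≤ z := hg.2 ▸ hg.1.monotone (Fin.zero_le _)
      simp only [hg.1, hg.2, true_and, and_true, Finset.sum_ite_eq, Finset.mem_Ioc, hgz]
      congr 1
      rw [mul_smul, mul_smul_comm, mul_smul_comm, mul_assoc]
    · rw [if_neg fun h => hg ⟨h.1.2, h.2⟩]
      exact (Finset.sum_eq_zero fun y _ => if_neg fun h => hg ⟨h.1, h.2.2⟩).symm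
  · simp [Fin.consEquiv, hy]

lemma PsiI_eq_sum_Ioc {x z : P} (hxz : x ≠ z) :
    PsiI ρ zb x z = ∑ y ∈ Finset.Ioc x z, zb x y • psiTerm ρ zb x y z := by
  simp only [PsiI_eq_psiLayer_zero_add, psiLayer_zero, if_neg hxz, zero_add, psiLayer_succ]
  rw [Finset.sum_comm]
  refine Finset.sum_congr rfl fun y _ => ?_
  rw [← Finset.smul_sum, ← Finset.mul_sum, sum_psiLayer_eq, psiTerm]

variable {ρ zb}

lemma sub_pow_mul_PsiI (hρ : StrictMono ρ) {x y z : P} (hxy : x ≤ y) (hyz : y ≠ z) :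
    (va - vb) ^ (ρ y - ρ x) * PsiI ρ zb y z
      = ∑ w ∈ Finset.Ioc y z, zb y w • psiTerm ρ zb x w z := by
  rw [PsiI_eq_sum_Ioc ρ zb hyz, Finset.mul_sum]
  refine Finset.sum_congr rfl fun w hw => ?_
  have h₁ := hρ.monotone hxy
  have h₂ := hρ (Finset.mem_Ioc.mp hw).1
  rw [mul_smul_comm, psiTerm, psiTerm, ← mul_assoc, ← pow_add]
  congr 3
  omega

theorem swapAB_PsiI (hρ : StrictMono ρ) (hzb : ∀ x, zb x x = 1) (he : IsEulerian ρ zb)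
    {x z : P} (hxz : x ≠ z) (hfix : ∀ y ∈ Finset.Ioo x z, swapAB (PsiI ρ zb y z) = PsiI ρ zb y z) :
    swapAB (PsiI ρ zb x z) = PsiI ρ zb x z := by
  have hshift : ∑ y ∈ Finset.Ioo x z, (-(-1 : ℤ) ^ (ρ y - ρ x) * zb x y) •
        ((va - vb) ^ (ρ y - ρ x) * PsiI ρ zb y z)
      = ∑ w ∈ Finset.Ioc x z, ((1 + (-1) ^ (ρ w - ρ x)) * zb x w) • psiTerm ρ zb x w z := by
    calc _ = ∑ y ∈ Finset.Ioo x z, ∑ w ∈ Finset.Ioc y z,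
            (-(-1 : ℤ) ^ (ρ y - ρ x) * zb x y * zb y w) • psiTerm ρ zb x w z := by
          refine Finset.sum_congr rfl fun y hy => ?_
          have hy := Finset.mem_Ioo.mp hy
          rw [sub_pow_mul_PsiI hρ hy.1.le hy.2.ne, Finset.smul_sum]
          simp only [smul_smul]
      _ = ∑ w ∈ Finset.Ioc x z, ∑ y ∈ Finset.Ioo x w,
            (-(-1 : ℤ) ^ (ρ y - ρ x) * zb x y * zb y w) • psiTerm ρ zb x w z := by
          refine Finset.sum_comm' fun y w => ?_
          simp only [Finset.mem_Ioo, Finset.mem_Ioc]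
          constructor
          · rintro ⟨⟨hxy, hyz⟩, hyw, hwz⟩
            exact ⟨⟨hxy, hyw⟩, hxy.trans hyw, hwz⟩
          · rintro ⟨⟨hxy, hyw⟩, hxw, hwz⟩
            exact ⟨⟨hxy, hyw.trans_le hwz⟩, hyw, hwz⟩
      _ = _ := by
          refine Finset.sum_congr rfl fun w hw => ?_
          simp only [← Finset.sum_smul, neg_mul, Finset.sum_neg_distrib,
            he.sum_Ioo hzb (Finset.mem_Ioc.mp hw).1]
          ring_nf
  calc swapAB (PsiI ρ zb x z)
      = ∑ w ∈ Finset.Ioc x z, zb x w • swapAB (psiTerm ρ zb x w z) := by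
        rw [PsiI_eq_sum_Ioc ρ zb hxz, map_sum]
        simp only [map_zsmul]
    _ = ∑ w ∈ Finset.Ioc x z, (-(-1 : ℤ) ^ (ρ w - ρ x) * zb x w) • psiTerm ρ zb x w z
        + ∑ y ∈ Finset.Ioo x z, (-(-1 : ℤ) ^ (ρ y - ρ x) * zb x y) •
          ((va - vb) ^ (ρ y - ρ x) * PsiI ρ zb y z) := by
        rw [← Finset.Ioc_erase_right, ← Finset.filter_ne', Finset.sum_filter,
          ← Finset.sum_add_distrib]
        refine Finset.sum_congr rfl fun w hw => ?_
        have hw := Finset.mem_Ioc.mp hw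
        rw [swapAB_psiTerm hρ hw.1 fun hwz => hfix w (Finset.mem_Ioo.mpr ⟨hw.1, hw.2.lt_of_ne hwz⟩)]
        split_ifs <;> simp only [smul_add, smul_smul, add_zero, mul_comm]
    _ = ∑ w ∈ Finset.Ioc x z, zb x w • psiTerm ρ zb x w z := by
        rw [hshift, ← Finset.sum_add_distrib]
        refine Finset.sum_congr rfl fun w _ => ?_
        rw [← add_smul]
        ring_nf
    _ = PsiI ρ zb x z := (PsiI_eq_sum_Ioc ρ zb hxz).symm

lemma PsiI_mem_cdExt {x z : P} (hxz : x ≠ z) (hmem : ∀ y ∈ Finset.Ioo x z, PsiI ρ zb y z ∈ cd) :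
    PsiI ρ zb x z ∈ cdExt := by
  rw [PsiI_eq_sum_Ioc ρ zb hxz]
  refine Submodule.sum_mem _ fun y hy => Submodule.smul_mem _ _ (sub_pow_mul_mem_cdExt _ ?_)
  have hy := Finset.mem_Ioc.mp hy
  by_cases hyz : y = z
  · simpa [hyz] using one_mem_cdExt
  · simpa [hyz] using vb_mul_mem_cdExt (hmem y (Finset.mem_Ioo.mpr ⟨hy.1, hy.2.lt_of_ne hyz⟩))

theorem PsiI_mem_cd (hρ : StrictMono ρ) (hzb : ∀ x, zb x x = 1) (he : IsEulerian ρ zb)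
    (x z : P) : PsiI ρ zb x z ∈ cd := by
  induction x using WellFoundedGT.induction with
  | _ x ih =>
  by_cases hxz : x = z
  · rw [hxz, PsiI_self]
    exact one_mem _
  have hmem : ∀ y ∈ Finset.Ioo x z, PsiI ρ zb y z ∈ cd :=
    fun y hy => ih y (Finset.mem_Ioo.mp hy).1
  exact mem_cd_of_mem_cdExt (PsiI_mem_cdExt hxz hmem)
    (swapAB_PsiI hρ hzb he hxz fun y hy => swapAB_eq_self_of_mem_cd (hmem y hy))

end Recursion

end CDIndex

end

theorem abIndex_mem_cd_general {P : Type} [Fintype P] [PartialOrder P] [BoundedOrder P]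
    (ρ : P → ℕ) (zb : P → P → ℤ) (hρ : StrictMono ρ)
    (hzb : ∀ x : P, zb x x = 1)
    (heul : ∀ x z : P, x < z →
      ∑ y ∈ Finset.univ.filter (fun y : P => x ≤ y ∧ y ≤ z),
        (-1 : ℤ) ^ (ρ y - ρ x) * zb x y * zb y z = 0) :
    PsiI ρ zb ⊥ ⊤ ∈ Algebra.adjoin ℤ ({va + vb, va * vb + vb * va} : Set Alg) := by
  let : LocallyFiniteOrder P := Fintype.toLocallyFiniteOrder
  have he : CDIndex.IsEulerian ρ zb := fun x z hxz => by
    rw [← Finset.filter_le_le_eq_Icc]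
    exact heul x z hxz
  exact CDIndex.PsiI_mem_cd hρ hzb he ⊥ ⊤

/-- the ab-index of an Eulerian quasi-graded poset is a polynomial
in `c = a+b` and `d = ab+ba` with integer coefficients. -/
theorem abIndex_mem_cd {P : Type} [Fintype P] [PartialOrder P] [BoundedOrder P]
    (ρ : P → ℕ) (zb : P → P → ℤ) (hρ0 : ρ ⊥ = 0) (hρ : StrictMono ρ)
    (hzb : ∀ x : P, zb x x = 1)
    (heul : ∀ x z : P, x < z →
      ∑ y ∈ Finset.univ.filter (fun y : P => x ≤ y ∧ y ≤ z),
        (-1 : ℤ) ^ (ρ y - ρ x) * zb x y * zb y z = 0) :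
    PsiI ρ zb ⊥ ⊤ ∈ Algebra.adjoin ℤ ({va + vb, va * vb + vb * va} : Set Alg) :=
  abIndex_mem_cd_general ρ zb hρ hzb heul
end

section
/- The ab-index of the dual of a quasi-graded poset equals the reverse of its ab-index: Ψ(P*, ρ*, ζ̄*) = Ψ(P, ρ, ζ̄)*, where on monomials (u_1 u_2 ⋯ u_n)* = u_n ⋯ u_2 u_1. -/
open scoped TensorProduct
open scoped Classical

/-! Reading a chain `⊥ = x₀ < x₁ < ⋯ < x_k = ⊤` of `P` backwards gives a chain of `P*`, and
every chain of `P*` arises this way exactly once. Reversal preserves the `ζ̄`-weight, and the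
`ρ*`-gaps of the reversed chain are the `ρ`-gaps of the original one in reverse order, so the
monomial weight `(a-b)^(g₁-1) b (a-b)^(g₂-1) b ⋯ b (a-b)^(g_k-1)` of the reversed chain is the
image of the original weight under `*`, an anti-automorphism of `ℤ⟨a,b⟩` fixing `a` and `b`. -/

theorem List.reverse_ofFn {α : Type*} {n : ℕ} (f : Fin n → α) :
    (List.ofFn f).reverse = List.ofFn (f ∘ Fin.rev) := by
  refine List.ext_getElem (by simp) fun i _ _ => ?_
  simp only [List.getElem_reverse, List.getElem_ofFn, List.length_ofFn, Function.comp_apply]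
  congr 1; ext; simp; omega

-- Both sides are `X 0 * b * X 1 * b * ⋯ * b * X (k - 1)`, bracketed differently.
theorem List.prod_ofFn_mul_ite_lt {M : Type*} [Monoid M] (b : M) :
    ∀ {k : ℕ} (X : Fin k → M),
      (List.ofFn fun i : Fin k => X i * if (i : ℕ) + 1 < k then b else 1).prod =
        (List.ofFn fun i : Fin k => (if 0 < (i : ℕ) then b else 1) * X i).prod
  | 0, _ => by simp
  | 1, _ => by simp
  | n + 2, X => by
    have ih := List.prod_ofFn_mul_ite_lt b (fun i : Fin (n + 1) => X i.succ)
    rw [List.ofFn_succ, List.prod_cons, List.ofFn_succ (n := n + 1), List.prod_cons]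
    simp only [Fin.val_succ, Nat.add_lt_add_iff_right] at ih ⊢
    rw [ih, List.ofFn_succ, List.ofFn_succ (n := n), List.prod_cons, List.prod_cons]
    simp [mul_assoc]

theorem Fin.strictMono_toDual_comp_comp_rev_iff {α : Type*} [Preorder α] {n : ℕ}
    {f : Fin n → α} : StrictMono (OrderDual.toDual ∘ f ∘ Fin.rev) ↔ StrictMono f := by
  rw [strictMono_toDual_comp_iff]
  refine ⟨fun h i j hij => ?_, fun h i j hij => h (Fin.rev_lt_rev.2 hij)⟩
  simpa using h (Fin.rev_lt_rev.2 hij)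

noncomputable def reverseAddEquiv : Alg ≃+ Alg :=
  MonoidAlgebra.mapDomainAddEquiv ℤ
    (Function.Involutive.toPerm FreeMonoid.reverse fun _ => FreeMonoid.reverse_reverse)

theorem revOp_eq_reverseAddEquiv (x : Alg) : revOp x = reverseAddEquiv x := by
  rw [revOp, ← MonoidAlgebra.ofCoeff_finsuppSum]; rfl

theorem revOp_single (w : FreeMonoid Bool) (c : ℤ) :
    revOp (MonoidAlgebra.single w c) = MonoidAlgebra.single w.reverse c := by
  rw [revOp_eq_reverseAddEquiv, reverseAddEquiv, MonoidAlgebra.mapDomainAddEquiv_single]; rfl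

theorem revOp_zero : revOp 0 = 0 := by
  rw [revOp_eq_reverseAddEquiv, map_zero]

theorem revOp_sub (x y : Alg) : revOp (x - y) = revOp x - revOp y := by
  simp only [revOp_eq_reverseAddEquiv, map_sub]

theorem revOp_zsmul (c : ℤ) (x : Alg) : revOp (c • x) = c • revOp x := by
  simp only [revOp_eq_reverseAddEquiv, map_zsmul]

theorem revOp_sum {ι : Type*} (s : Finset ι) (g : ι → Alg) :
    revOp (∑ i ∈ s, g i) = ∑ i ∈ s, revOp (g i) := by
  simp only [revOp_eq_reverseAddEquiv, map_sum]

theorem revOp_mul (x y : Alg) : revOp (x * y) = revOp y * revOp x := by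
  simp only [revOp_eq_reverseAddEquiv]
  induction x using MonoidAlgebra.induction_linear with
  | zero => simp
  | add x x' hx hx' => simp only [add_mul, mul_add, map_add, hx, hx']
  | single w c =>
    induction y using MonoidAlgebra.induction_linear with
    | zero => simp
    | add y y' hy hy' => simp only [add_mul, mul_add, map_add, hy, hy']
    | single w' c' =>
      simp only [← revOp_eq_reverseAddEquiv, MonoidAlgebra.single_mul_single, revOp_single,
        FreeMonoid.reverse_mul, mul_comm c]

theorem revOp_one : revOp 1 = 1 := revOp_single 1 1

theorem revOp_pow (x : Alg) (n : ℕ) : revOp (x ^ n) = revOp x ^ n := by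
  induction n with
  | zero => exact revOp_one
  | succ n ih => rw [pow_succ, revOp_mul, ih, pow_succ']

theorem revOp_list_prod (l : List Alg) : revOp l.prod = (l.map revOp).reverse.prod := by
  induction l with
  | nil => exact revOp_one
  | cons x l ih => simp [revOp_mul, ih]

theorem revOp_va : revOp va = va := revOp_single _ 1

theorem revOp_vb : revOp vb = vb := revOp_single _ 1

theorem zetaChain_comp_rev {P : Type} (zb : P → P → ℤ) {k : ℕ} (f : Fin (k + 1) → P) :
    zetaChain (fun x y => zb y x) (f ∘ Fin.rev) = zetaChain zb f :=
  Fintype.prod_equiv Fin.revPerm _ _ fun i => by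
    simp [Fin.rev_succ, Fin.rev_castSucc]

theorem wtChain_comp_rev {P : Type} (ρ : P → ℕ) (t : ℕ) (hρ : ∀ x, ρ x ≤ t) {k : ℕ}
    (f : Fin (k + 1) → P) :
    wtChain (fun x => t - ρ x) (f ∘ Fin.rev) = revOp (wtChain ρ f) := by
  have hgap (i : Fin k) : t - ρ (f i.succ.rev) - (t - ρ (f i.castSucc.rev)) =
      ρ (f i.rev.succ) - ρ (f i.rev.castSucc) := by
    rw [Fin.rev_succ, Fin.rev_castSucc]
    have := hρ (f i.rev.succ)
    omega
  have hsep (i : Fin k) : (i.rev : ℕ) + 1 < k ↔ 0 < (i : ℕ) := by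
    rw [Fin.val_rev]; omega
  unfold wtChain
  rw [List.prod_ofFn_mul_ite_lt, revOp_list_prod, List.map_ofFn, List.reverse_ofFn]
  congr 2
  funext i
  simp only [Function.comp_apply, hgap, revOp_mul, revOp_pow, revOp_sub, revOp_va, revOp_vb,
    apply_ite revOp, revOp_one, hsep]

theorem abIndex_dual_general {P : Type} [Fintype P] [PartialOrder P] [BoundedOrder P]
    (ρ : P → ℕ) (zb : P → P → ℤ) (hρ : StrictMono ρ) :
    PsiI (P := Pᵒᵈ) (fun x => ρ (⊤ : P) - ρ (OrderDual.ofDual x))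
        (fun x y => zb (OrderDual.ofDual y) (OrderDual.ofDual x)) ⊥ ⊤
      = revOp (PsiI ρ zb ⊥ ⊤) := by
  unfold PsiI
  rw [revOp_sum]
  refine Finset.sum_congr rfl fun k _ => ?_
  rw [revOp_sum]
  refine (Fintype.sum_bijective (fun f => OrderDual.toDual ∘ f ∘ Fin.rev)
    (Fin.revPerm.arrowCongr OrderDual.toDual).bijective _ _ fun f => ?_).symm
  rw [apply_ite revOp, revOp_zsmul, revOp_zero, ← zetaChain_comp_rev zb f,
    ← wtChain_comp_rev ρ (ρ ⊤) (fun _ => hρ.monotone le_top) f]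
  refine if_congr ?_ rfl rfl
  simp only [Fin.strictMono_toDual_comp_comp_rev_iff, Function.comp_apply, Fin.rev_zero,
    Fin.rev_last, OrderDual.toDual_eq_bot, OrderDual.toDual_eq_top]
  exact and_congr_right' and_comm

/-- the ab-index of the dual quasi-graded poset is the reverse of
the ab-index: `Ψ(P*, ρ*, ζ̄*) = Ψ(P, ρ, ζ̄)*`. -/
theorem abIndex_dual {P : Type} [Fintype P] [PartialOrder P] [BoundedOrder P]
    (ρ : P → ℕ) (zb : P → P → ℤ) (hρ0 : ρ ⊥ = 0) (hρ : StrictMono ρ)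
    (hzb : ∀ x : P, zb x x = 1) :
    PsiI (P := Pᵒᵈ) (fun x => ρ (⊤ : P) - ρ (OrderDual.ofDual x))
        (fun x y => zb (OrderDual.ofDual y) (OrderDual.ofDual x)) ⊥ ⊤
      = revOp (PsiI ρ zb ⊥ ⊤) :=
  abIndex_dual_general ρ zb hρ
end

section
/- Let P be a graded intersection poset of a spherical arrangement, i.e., every element x with 0̂ < x < 1̂ is a sphere and χ(x) = 1 + (−1)^{dim x}, where ρ(x) + dim(x) is constant on P − {1̂}. Then the manifold Zaslavsky invariant equals the Zaslavsky invariant on every upper interval: Z_M([y,1̂]; χ) = Σ_{y ≤ x ≤ 1̂} (−1)^{ρ(y,x)} μ(y,x) χ(x) = Σ_{y ≤ x ≤ 1̂} (−1)^{ρ(y,x)} μ(y,x) = Z([y,1̂]). -/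
open scoped TensorProduct
open scoped Classical

namespace Int

theorem ite_even_two_zero_eq_one_add_negOnePow (d : ℤ) :
    (if Even d then 2 else 0 : ℤ) = 1 + (d.negOnePow : ℤ) := by
  rcases d.even_or_odd with hd | hd
  · simp [hd, negOnePow_even d hd]
  · simp [Int.not_even_iff_odd.mpr hd, negOnePow_odd d hd]

theorem neg_one_pow_sub_mul_negOnePow_sub {a b : ℕ} (hba : b ≤ a) (n : ℤ) :
    (-1 : ℤ) ^ (a - b) * ((n - a).negOnePow : ℤ) = ((n - b).negOnePow : ℤ) := by
  have hsplit : n - b = ((a - b : ℕ) : ℤ) + (n - a) := by omega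
  rw [hsplit, negOnePow_add, Units.val_mul, coe_negOnePow_natCast]

end Int

namespace IncidenceAlgebra

theorem sum_mu_filter_le_eq_zero {𝕜 P : Type*} [AddCommGroup 𝕜] [One 𝕜] [Fintype P]
    [PartialOrder P] [OrderTop P] [LocallyFiniteOrder P] [DecidableEq P] [DecidableLE P]
    {y : P} (hy : y < ⊤) :
    ∑ x ∈ Finset.univ.filter (fun x : P => y ≤ x), mu 𝕜 y x = 0 := by
  have hIcc : Finset.univ.filter (fun x : P => y ≤ x) = Finset.Icc y ⊤ := by
    ext x
    simp
  rw [hIcc, sum_Icc_mu_right, if_neg hy.ne]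

end IncidenceAlgebra

/-- for the graded intersection poset of a spherical arrangement
(every proper element a sphere, `χ(x) = 1 + (-1)^{dim x}`, `ρ + dim` constant),
the manifold Zaslavsky invariant equals the Zaslavsky invariant on every upper
interval `[y, 1̂]` with `y < 1̂`. -/
theorem spherical_ZM_eq_Z {P : Type} [Fintype P] [PartialOrder P] [BoundedOrder P]
    [DecidableEq P] [LocallyFiniteOrder P]
    (n : ℤ) (ρ : P → ℕ) (dimfun : P → ℤ) (χfun : P → ℤ)
    (hρ : StrictMono ρ)
    (hχ : ∀ x : P, χfun x = if Even (dimfun x) then 2 else 0)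
    (hconst : ∀ x : P, (ρ x : ℤ) + dimfun x = n)
    (y : P) (hy : y < ⊤) :
    ∑ x ∈ Finset.univ.filter (fun x : P => y ≤ x),
        (-1 : ℤ) ^ (ρ x - ρ y) * IncidenceAlgebra.mu ℤ y x * χfun x
      = ∑ x ∈ Finset.univ.filter (fun x : P => y ≤ x),
          (-1 : ℤ) ^ (ρ x - ρ y) * IncidenceAlgebra.mu ℤ y x := by
  -- `χ = 1 + (-1)^dim` and `ρ + dim = n` make the sign of the extra term independent of `x`,
  -- and the Möbius function sums to zero over `[y, ⊤]`.
  have hsummand : ∀ x ∈ Finset.univ.filter (fun x : P => y ≤ x),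
      (-1 : ℤ) ^ (ρ x - ρ y) * IncidenceAlgebra.mu ℤ y x * χfun x
        = (-1 : ℤ) ^ (ρ x - ρ y) * IncidenceAlgebra.mu ℤ y x
          + ((n - ρ y).negOnePow : ℤ) * IncidenceAlgebra.mu ℤ y x := by
    intro x hx
    have hdim : dimfun x = n - ρ x := by linarith [hconst x]
    rw [hχ, hdim, Int.ite_even_two_zero_eq_one_add_negOnePow,
      ← Int.neg_one_pow_sub_mul_negOnePow_sub (hρ.monotone (Finset.mem_filter.mp hx).2)]
    ring
  rw [Finset.sum_congr rfl hsummand, Finset.sum_add_distrib, ← Finset.mul_sum,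
    IncidenceAlgebra.sum_mu_filter_le_eq_zero hy, mul_zero, add_zero]
end
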